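/- arXiv:2310.12265 — 3 statements merged into one kernel-verified Lean document; each statement's English description precedes it below -/
import Mathlib

section
/- If w ∈ G(m, p, n) satisfies ℓ_R(w) = codimfix(w), and every subset of the multiset of cycle weights of w that sums to 0 (mod p) is a disjoint union of some weights that are 0 (mod p) and some pairs of weights that sum to 0 in ℤ/mℤ, then [id, w]_{ℓ_R} = [id, w]_{cdf}. -/
open Equiv Finset
@[ext]
structure GW (m n : ℕ) where
  perm : Equiv.Perm (Fin n)
  wt : Fin n → ZMod m
namespace GW
variable {m n : ℕ}
instance : Mul (GW m n) :=
  ⟨fun x y => ⟨x.perm * y.perm, fun i => x.wt i + y.wt (x.perm⁻¹ i)⟩⟩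
instance : One (GW m n) := ⟨⟨1, 0⟩⟩
instance : Inv (GW m n) := ⟨fun x => ⟨x.perm⁻¹, fun i => -x.wt (x.perm i)⟩⟩
@[simp] theorem mul_perm (x y : GW m n) : (x * y).perm = x.perm * y.perm := rfl
@[simp] theorem mul_wt (x y : GW m n) (i : Fin n) :
    (x * y).wt i = x.wt i + y.wt (x.perm⁻¹ i) := rfl
@[simp] theorem one_perm : (1 : GW m n).perm = 1 := rfl
@[simp] theorem one_wt (i : Fin n) : (1 : GW m n).wt i = 0 := rfl
@[simp] theorem inv_perm (x : GW m n) : (x⁻¹).perm = x.perm⁻¹ := rfl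
@[simp] theorem inv_wt (x : GW m n) (i : Fin n) : (x⁻¹).wt i = -x.wt (x.perm i) := rfl
private theorem gw_mul_assoc (a b c : GW m n) : a * b * c = a * (b * c) := by
  ext i
  · simp [mul_assoc]
  · simp [mul_inv_rev, add_assoc]
private theorem gw_one_mul (a : GW m n) : 1 * a = a := by ext i <;> simp
private theorem gw_mul_one (a : GW m n) : a * 1 = a := by ext i <;> simp
private theorem gw_inv_mul_cancel (a : GW m n) : a⁻¹ * a = 1 := by ext i <;> simp
instance : Group (GW m n) where
  mul := (· * ·)
  one := 1
  inv := Inv.inv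
  mul_assoc := gw_mul_assoc
  one_mul := gw_one_mul
  mul_one := gw_mul_one
  inv_mul_cancel := gw_inv_mul_cancel
def cycleOf (w : GW m n) (i : Fin n) : Finset (Fin n) :=
  Finset.univ.filter fun j => w.perm.SameCycle i j
def cycles (w : GW m n) : Finset (Finset (Fin n)) :=
  Finset.univ.image fun i => w.cycleOf i
def cycWt (w : GW m n) (C : Finset (Fin n)) : ZMod m := ∑ i ∈ C, w.wt i
def numCycles (w : GW m n) : ℕ := (cycles w).card
def c0 (w : GW m n) : ℕ := ((cycles w).filter fun C => cycWt w C = 0).card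
def codimfix (w : GW m n) : ℕ := n - c0 w
def wtTot (w : GW m n) : ZMod m := ∑ i, w.wt i

-- NEW PIECES BELOW --

/-- The base relation on cycles of `w` induced by `u`: two cycles of `w` are related if
some cycle of `u` meets both of them. -/
def piRelBase (u w : GW m n) (C₁ C₂ : Finset (Fin n)) : Prop :=
  C₁ ∈ cycles w ∧ C₂ ∈ cycles w ∧ ∃ D ∈ cycles u, (D ∩ C₁).Nonempty ∧ (D ∩ C₂).Nonempty

/-- The equivalence relation on the cycles of `w` generated by `piRelBase`. -/
def piRel (u w : GW m n) : Finset (Fin n) → Finset (Fin n) → Prop :=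
  Relation.EqvGen (piRelBase u w)

open Classical in
/-- The part of the partition `Π_u(w)` containing the cycle `C` of `w`. -/
noncomputable def piPart (u w : GW m n) (C : Finset (Fin n)) : Finset (Finset (Fin n)) :=
  (cycles w).filter fun C' => piRel u w C C'

/-- The set partition `Π_u(w)` of the cycles of `w`, as the set of its parts. -/
noncomputable def piParts (u w : GW m n) : Finset (Finset (Finset (Fin n))) :=
  (cycles w).image fun C => piPart u w C

/-- The weight of a collection `B` of cycles: the sum of the weights of its cycles. -/
def partWt (w : GW m n) (B : Finset (Finset (Fin n))) : ZMod m :=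
  ∑ C ∈ B, cycWt w C

open Classical in
/-- The number of parts of `Π_u(w)` of nonzero total weight. -/
noncomputable def piPartsNonzeroWt (u w : GW m n) : ℕ :=
  ((piParts u w).filter fun B => partWt w B ≠ 0).card

/-- The support of a collection of cycles: the union of the cycles' underlying sets. -/
def supp (B : Finset (Finset (Fin n))) : Finset (Fin n) := B.sup id

/-- Restriction of a permutation to an invariant set `A` (junk value `1` if `A` is
not invariant): it agrees with `σ` on `A` and is the identity off `A`. -/
noncomputable def restrictPerm (σ : Equiv.Perm (Fin n)) (A : Finset (Fin n)) :
    Equiv.Perm (Fin n) :=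
  if h : ∀ i, σ i ∈ A ↔ i ∈ A then
    { toFun := fun i => if i ∈ A then σ i else i
      invFun := fun i => if i ∈ A then σ.symm i else i
      left_inv := by
        intro i
        by_cases hi : i ∈ A
        · simp [hi, (h i).mpr hi]
        · simp [hi]
      right_inv := by
        intro j
        by_cases hj : j ∈ A
        · have hs : σ.symm j ∈ A := by
            have h2 := h (σ.symm j)
            rw [Equiv.apply_symm_apply] at h2
            exact h2.mp hj
          simp [hj, hs]
        · simp [hj] }
  else 1


/-- The restriction `x|_A` of `x` to a subset `A` of `{1,…,n}` (stabilized by `x`):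
it agrees with `x` on `A` and acts as the identity, with weight `0`, off `A`. -/
noncomputable def restrict (x : GW m n) (A : Finset (Fin n)) : GW m n :=
  ⟨restrictPerm x.perm A, fun i => if i ∈ A then x.wt i else 0⟩

/-- The cycles of `x` contained in `A`; for `x = y|_A` this gives the cycles of the
restriction of `y` to `A`, viewed as an element of `G(m,1,#A)`. -/
def cyclesIn (x : GW m n) (A : Finset (Fin n)) : Finset (Finset (Fin n)) :=
  (cycles x).filter fun C => C ⊆ A

/-- The monomial matrix representing `w`: the nonzero entry in column `j` sits in row
`w.perm j` and equals `ζ^(a_(w.perm j))`, where `ζ = exp(2πi/m)`. -/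
noncomputable def toMatrix (w : GW m n) : Matrix (Fin n) (Fin n) ℂ :=
  Matrix.of fun i j =>
    if w.perm j = i then Complex.exp (2 * Real.pi * Complex.I * ((w.wt i).val : ℂ) / (m : ℂ))
    else 0

/-- `S` (a set of cycles of `w`) can be partitioned into singletons whose weight is
`0 (mod p)` and pairs of cycles whose weights sum to `0` in `ℤ/mℤ`; encoded by an
involution pairing up the cycles. -/
def PairedUp (p : ℕ) (hpm : p ∣ m) (w : GW m n) (S : Finset (Finset (Fin n))) : Prop :=
  ∃ π : {C // C ∈ S} → {C // C ∈ S}, Function.Involutive π ∧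
    (∀ C, π C = C → ZMod.castHom hpm (ZMod p) (cycWt w C.1) = 0) ∧
    (∀ C, π C ≠ C → cycWt w C.1 + cycWt w (π C).1 = 0)

/-- Membership in `G(m,p,n)`: the total weight is `0 (mod p)`. -/
def Gmem (p : ℕ) (hpm : p ∣ m) (w : GW m n) : Prop :=
  ZMod.castHom hpm (ZMod p) (wtTot w) = 0

/-- A reflection of `G(m,p,n)`: an element of the group whose fixed space has codimension 1. -/
def IsRefl (p : ℕ) (hpm : p ∣ m) (t : GW m n) : Prop :=
  Gmem p hpm t ∧ codimfix t = 1

/-- The reflection length of `w` with respect to the reflections of `G(m,p,n)`. -/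
noncomputable def lR (p : ℕ) (hpm : p ∣ m) (w : GW m n) : ℕ :=
  sInf {k | ∃ l : List (GW m n), (∀ t ∈ l, IsRefl p hpm t) ∧ l.length = k ∧ l.prod = w}

/-- The order `≤_f` determined by a subadditive function `f`. -/
def leF (f : GW m n → ℕ) (x y : GW m n) : Prop := f x + f (x⁻¹ * y) = f y

/-- The interval `[id, w]_f` inside the poset `(G(m,p,n), ≤_f)`. -/
def interval (p : ℕ) (hpm : p ∣ m) (f : GW m n → ℕ) (w : GW m n) : Set (GW m n) :=
  {u | Gmem p hpm u ∧ leF f u w}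

/-- A vector `v ∈ ℂⁿ` is regular for `G(m,p,n)` if it is fixed by no reflection. -/
def IsRegularVec (p : ℕ) (hpm : p ∣ m) (v : Fin n → ℂ) : Prop :=
  ∀ t : GW m n, IsRefl p hpm t → (toMatrix t).mulVec v ≠ v

/-- An element `w ∈ G(m,p,n)` is regular if it has an eigenvector that is a regular vector. -/
def IsRegularElt (p : ℕ) (hpm : p ∣ m) (w : GW m n) : Prop :=
  ∃ v : Fin n → ℂ, v ≠ 0 ∧ (∃ c : ℂ, (toMatrix w).mulVec v = c • v) ∧ IsRegularVec p hpm v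

end GW

/-!
Subadditivity of `codimfix`: every `x ≠ 1` is a reflection times an element with one more
weight-zero cycle, while multiplying by a reflection destroys at most one weight-zero cycle (it
merges two cycles, splits one, or changes one weight). As every element of `G(m,p,n)` is a product
of reflections, `codimfix ≤ ℓ_R` there, and `ℓ_R(w) = codimfix(w)` turns `u ≤_{ℓ_R} w` into
`u ≤_cdf w`.

Conversely, let `u ≤_cdf w` and `v = u⁻¹w`. Zeroing the weight of a nonzero-weight cycle `C` of `u`
by a diagonal factor `d` raises `c0 u` by one, and tightness forces `c0 (d * w)` to rise as well: so
the cycle of `w` through `C` has the weight of `C`, and distinct such `C` meet distinct cycles of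
`w` (likewise for `v`, via inverses). The
hypothesis on `w` pairs up these cycles into weight-`0 (mod p)` singletons and cancelling pairs,
which are removed by one diagonal reflection, resp. two transpositions — exactly their
contribution to `codimfix`. Hence `ℓ_R = codimfix` for `u` and `v`.
-/

namespace Equiv.Perm

variable {α : Type*} [Finite α] {σ ρ : Perm α} {a b : α}

theorem SameCycle.mem_of_forall_apply_mem {T : Set α} (h : σ.SameCycle a b)
    (hT : ∀ x ∈ T, σ x ∈ T) (ha : a ∈ T) : b ∈ T := by
  obtain ⟨k, rfl⟩ := h.exists_nat_pow_eq
  rw [coe_pow]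
  exact Set.MapsTo.iterate hT k ha

theorem sameCycle_iff_of_forall_sameCycle_apply_eq (h : ∀ x, σ.SameCycle a x → ρ x = σ x) :
    ρ.SameCycle a b ↔ σ.SameCycle a b := by
  constructor
  · intro hab
    refine hab.mem_of_forall_apply_mem (T := {x | σ.SameCycle a x}) (fun x hx => ?_) .rfl
    rw [Set.mem_ofPred_eq, h x hx]
    exact sameCycle_apply_right.2 hx
  · intro hab
    refine (hab.mem_of_forall_apply_mem (T := {x | ρ.SameCycle a x ∧ σ.SameCycle a x})
      (fun x hx => ?_) ⟨.rfl, .rfl⟩).1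
    refine ⟨?_, sameCycle_apply_right.2 hx.2⟩
    rw [← h x hx.2]
    exact sameCycle_apply_right.2 hx.1

variable [DecidableEq α]

theorem SameCycle.mem_of_forall_swap_mul_apply_mem {i j : α} (hij : ¬σ.SameCycle i j)
    {D : Set α} (hD : ∀ x ∈ D, (swap i j * σ) x ∈ D) (hi : i ∈ D) (h : σ.SameCycle i b) :
    b ∈ D := by
  refine (h.mem_of_forall_apply_mem (T := {x | x ∈ D ∧ σ.SameCycle i x})
    (fun x ⟨hxD, hx⟩ => ⟨?_, sameCycle_apply_right.2 hx⟩) ⟨hi, .rfl⟩).1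
  by_cases hσx : σ x = i
  · rwa [hσx]
  · have hσxj : σ x ≠ j := fun e => hij (e ▸ sameCycle_apply_right.2 hx)
    simpa [swap_apply_of_ne_of_ne hσx hσxj] using hD x hxD

theorem sameCycle_swap_mul_iff {i j : α} (hij : ¬σ.SameCycle i j) :
    (swap i j * σ).SameCycle i b ↔ σ.SameCycle i b ∨ σ.SameCycle j b := by
  constructor
  · intro h
    refine h.mem_of_forall_apply_mem (T := {x | σ.SameCycle i x ∨ σ.SameCycle j x})
      (fun x hx => ?_) (Or.inl .rfl)
    have hσx : σ.SameCycle i (σ x) ∨ σ.SameCycle j (σ x) := by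
      rwa [sameCycle_apply_right, sameCycle_apply_right]
    rw [Set.mem_ofPred_eq, mul_apply]
    rcases eq_or_ne (σ x) i with e | hi
    · rw [e, swap_apply_left]; exact Or.inr .rfl
    rcases eq_or_ne (σ x) j with e | hj
    · rw [e, swap_apply_right]; exact Or.inl .rfl
    rwa [swap_apply_of_ne_of_ne hi hj]
  · have hD : ∀ x ∈ {x | (swap i j * σ).SameCycle i x}, (swap i j * σ) x ∈
        {x | (swap i j * σ).SameCycle i x} := fun x hx => sameCycle_apply_right.2 hx
    have hj : (swap i j * σ).SameCycle i j := by
      -- `σ⁻¹ i` lies in the `σ`-cycle of `i` and is sent to `j`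
      have h := SameCycle.mem_of_forall_swap_mul_apply_mem hij hD SameCycle.rfl
        (b := σ.symm i) (sameCycle_symm_apply_right.2 .rfl)
      simpa using sameCycle_apply_right.2 h
    rintro (h | h)
    · exact SameCycle.mem_of_forall_swap_mul_apply_mem hij hD .rfl h
    · rw [swap_comm] at hD ⊢
      exact SameCycle.mem_of_forall_swap_mul_apply_mem (fun e => hij e.symm) hD
        (by rwa [swap_comm]) h

theorem sameCycle_swap_mul_iff_of_not_sameCycle {i j k : α} (hi : ¬σ.SameCycle k i)
    (hj : ¬σ.SameCycle k j) : (swap i j * σ).SameCycle k b ↔ σ.SameCycle k b := by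
  refine sameCycle_iff_of_forall_sameCycle_apply_eq fun x hx => ?_
  have hσx := sameCycle_apply_right.2 hx
  exact swap_apply_of_ne_of_ne (fun e => hi (e ▸ hσx)) (fun e => hj (e ▸ hσx))

end Equiv.Perm

namespace GW

section Pairing

variable {α β : Type*} {m p : ℕ} {hpm : p ∣ m}

/-- `PairedUp`, with the pairing `π` defined on the ambient type. -/
structure IsPairing (hpm : p ∣ m) (wt : α → ZMod m) (S : Finset α) (π : α → α) : Prop where
  mapsTo : ∀ C ∈ S, π C ∈ S
  apply_apply : ∀ C ∈ S, π (π C) = C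
  cast_eq_zero : ∀ C ∈ S, π C = C → ZMod.castHom hpm (ZMod p) (wt C) = 0
  add_eq_zero : ∀ C ∈ S, π C ≠ C → wt C + wt (π C) = 0

theorem IsPairing.sdiff [DecidableEq α] {wt wt' : α → ZMod m} {S Z : Finset α} {π : α → α}
    (h : IsPairing hpm wt S π) (hZ : ∀ C ∈ S, C ∈ Z → π C ∈ Z)
    (hwt : ∀ C ∈ S \ Z, wt' C = wt C) : IsPairing hpm wt' (S \ Z) π := by
  have hmaps : ∀ C ∈ S \ Z, π C ∈ S \ Z := fun C hC => by
    obtain ⟨hCS, hCZ⟩ := mem_sdiff.1 hC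
    refine mem_sdiff.2 ⟨h.mapsTo C hCS, fun hπ => hCZ ?_⟩
    rw [← h.apply_apply C hCS]
    exact hZ _ (h.mapsTo C hCS) hπ
  refine ⟨hmaps, fun C hC => h.apply_apply C (mem_sdiff.1 hC).1, fun C hC hfix => ?_,
    fun C hC hne => ?_⟩
  · rw [hwt C hC]
    exact h.cast_eq_zero C (mem_sdiff.1 hC).1 hfix
  · rw [hwt C hC, hwt _ (hmaps C hC)]
    exact h.add_eq_zero C (mem_sdiff.1 hC).1 hne

theorem IsPairing.comap [Nonempty α] [DecidableEq β] {wt : α → ZMod m} {wt' : β → ZMod m}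
    {S : Finset α} {φ : α → β} {π' : β → β} (h : IsPairing hpm wt' (S.image φ) π')
    (hφ : Set.InjOn φ S) (hwt : ∀ C ∈ S, wt' (φ C) = wt C) : ∃ π, IsPairing hpm wt S π := by
  have hex : ∀ C ∈ S, ∃ D ∈ S, φ D = π' (φ C) := fun C hC =>
    mem_image.1 (h.mapsTo _ (mem_image_of_mem φ hC))
  have hmem : ∀ C ∈ S, Function.invFunOn φ S (π' (φ C)) ∈ S := fun C hC =>
    Function.invFunOn_mem (hex C hC)
  have hφπ : ∀ C ∈ S, φ (Function.invFunOn φ S (π' (φ C))) = π' (φ C) := fun C hC =>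
    Function.invFunOn_eq (hex C hC)
  refine ⟨fun C => Function.invFunOn φ S (π' (φ C)), hmem, fun C hC => ?_, fun C hC hfix => ?_,
    fun C hC hne => ?_⟩
  · refine hφ (hmem _ (hmem C hC)) hC ?_
    rw [hφπ _ (hmem C hC), hφπ C hC, h.apply_apply _ (mem_image_of_mem φ hC)]
  · rw [← hwt C hC]
    refine h.cast_eq_zero _ (mem_image_of_mem φ hC) ?_
    rw [← hφπ C hC, hfix]
  · rw [← hwt C hC, ← hwt _ (hmem C hC), hφπ C hC]
    refine h.add_eq_zero _ (mem_image_of_mem φ hC) fun hfix => hne (hφ (hmem C hC) hC ?_)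
    rw [hφπ C hC, hfix]

end Pairing

variable {m n : ℕ} {x y : GW m n} {C C' D : Finset (Fin n)} {i j k q q' : Fin n}

theorem mem_cycleOf : j ∈ x.cycleOf i ↔ x.perm.SameCycle i j := by
  simp [cycleOf]

theorem mem_cycleOf_self (x : GW m n) (i : Fin n) : i ∈ x.cycleOf i :=
  mem_cycleOf.2 .rfl

theorem cycleOf_eq_cycleOf_iff : x.cycleOf i = x.cycleOf j ↔ x.perm.SameCycle i j := by
  refine ⟨fun h => mem_cycleOf.1 (h ▸ mem_cycleOf_self x j), fun h => ?_⟩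
  ext k
  simp only [mem_cycleOf]
  exact ⟨h.symm.trans, h.trans⟩

theorem cycleOf_mem_cycles (x : GW m n) (i : Fin n) : x.cycleOf i ∈ x.cycles :=
  mem_image_of_mem _ (mem_univ i)

theorem mem_cycles : C ∈ x.cycles ↔ ∃ i, x.cycleOf i = C := by
  simp [cycles]

theorem cycleOf_eq_of_mem (hC : C ∈ x.cycles) (hk : k ∈ C) : x.cycleOf k = C := by
  obtain ⟨i, rfl⟩ := mem_cycles.1 hC
  exact cycleOf_eq_cycleOf_iff.2 (mem_cycleOf.1 hk).symm

theorem nonempty_of_mem_cycles (hC : C ∈ x.cycles) : C.Nonempty := by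
  obtain ⟨i, rfl⟩ := mem_cycles.1 hC
  exact ⟨i, mem_cycleOf_self x i⟩

theorem perm_apply_mem_iff (hC : C ∈ x.cycles) : x.perm k ∈ C ↔ k ∈ C := by
  obtain ⟨i, rfl⟩ := mem_cycles.1 hC
  simp only [mem_cycleOf, Perm.sameCycle_apply_right]

theorem cycleOf_eq_of_perm_eq (h : x.perm = y.perm) : x.cycleOf = y.cycleOf := by
  unfold cycleOf
  rw [h]

theorem cycles_eq_of_perm_eq (h : x.perm = y.perm) : x.cycles = y.cycles := by
  unfold cycles
  rw [cycleOf_eq_of_perm_eq h]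

theorem sum_cycWt (x : GW m n) : ∑ C ∈ x.cycles, cycWt x C = wtTot x := by
  have hfiber : ∀ C ∈ x.cycles, univ.filter (fun k => x.cycleOf k = C) = C := fun C hC => by
    ext k
    simp only [mem_filter, mem_univ, true_and]
    exact ⟨fun h => h ▸ mem_cycleOf_self x k, cycleOf_eq_of_mem hC⟩
  rw [wtTot, ← sum_fiberwise_of_maps_to (fun k _ => cycleOf_mem_cycles x k)]
  exact sum_congr rfl fun C hC => by rw [hfiber C hC, cycWt]

theorem c0_eq_sum (x : GW m n) : c0 x = ∑ C ∈ x.cycles, if cycWt x C = 0 then 1 else 0 :=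
  card_filter _ _

theorem c0_le (x : GW m n) : c0 x ≤ n :=
  (card_filter_le _ _).trans (card_image_le.trans (by simp))

theorem cycleOf_one (i : Fin n) : (1 : GW m n).cycleOf i = {i} := by
  ext k
  simp [mem_cycleOf, Perm.sameCycle_one, eq_comm]

theorem c0_one : c0 (1 : GW m n) = n := by
  have hwt : ∀ C ∈ (1 : GW m n).cycles, cycWt 1 C = 0 := fun C _ => sum_eq_zero fun i _ => one_wt (m := m) i
  rw [c0, filter_true_of_mem hwt, cycles, card_image_of_injective]
  · simp
  · intro i j h
    simpa [cycleOf_one] using h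

theorem codimfix_one : codimfix (1 : GW m n) = 0 := by
  simp [codimfix, c0_one]

theorem cycles_inv (x : GW m n) : x⁻¹.cycles = x.cycles := by
  simp only [cycles, cycleOf, inv_perm, Perm.sameCycle_inv]

theorem cycWt_inv (hC : C ∈ x.cycles) : cycWt x⁻¹ C = -cycWt x C := by
  have hmap : C.map x.perm.toEmbedding = C := by
    ext k
    simpa using (perm_apply_mem_iff (k := x.perm⁻¹ k) hC).symm
  simp only [cycWt, inv_wt, sum_neg_distrib, neg_inj]
  conv_rhs => rw [← hmap, sum_map]
  rfl

theorem c0_inv (x : GW m n) : c0 x⁻¹ = c0 x := by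
  rw [c0, c0, cycles_inv]
  congr 1
  exact filter_congr fun C hC => by rw [cycWt_inv hC, neg_eq_zero]

theorem codimfix_inv (x : GW m n) : codimfix x⁻¹ = codimfix x := by
  rw [codimfix, codimfix, c0_inv]

theorem wtTot_mul (x y : GW m n) : wtTot (x * y) = wtTot x + wtTot y := by
  simp only [wtTot, mul_wt, sum_add_distrib, add_right_inj]
  exact Equiv.sum_comp x.perm⁻¹ y.wt

theorem wtTot_inv (x : GW m n) : wtTot x⁻¹ = -wtTot x := by
  simp only [wtTot, inv_wt, sum_neg_distrib, neg_inj]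
  exact Equiv.sum_comp x.perm x.wt

def diag (a : Fin n → ZMod m) : GW m n := ⟨1, a⟩

@[simp] theorem diag_mul_perm (a : Fin n → ZMod m) (x : GW m n) : (diag a * x).perm = x.perm :=
  one_mul _

theorem diag_mul_diag_mul (a b : Fin n → ZMod m) (x : GW m n) :
    diag a * (diag b * x) = diag (a + b) * x := by
  ext <;> simp [diag, add_assoc]

theorem diag_zero : (diag 0 : GW m n) = 1 := rfl

theorem eq_diag_mul_diag_neg_mul (a : Fin n → ZMod m) (x : GW m n) :
    x = diag a * (diag (-a) * x) := by
  rw [diag_mul_diag_mul, add_neg_cancel, diag_zero, one_mul]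

theorem cycWt_diag_mul (a : Fin n → ZMod m) (x : GW m n) (C : Finset (Fin n)) :
    cycWt (diag a * x) C = ∑ k ∈ C, a k + cycWt x C := by
  simp [cycWt, diag, sum_add_distrib]

theorem wtTot_diag (a : Fin n → ZMod m) : wtTot (diag a) = ∑ k, a k := rfl

theorem mem_iff_eq_of_mem_cycles (hC : C ∈ x.cycles) (hD : D ∈ x.cycles) (hq : q ∈ C) :
    q ∈ D ↔ D = C :=
  ⟨fun h => (cycleOf_eq_of_mem hD h).symm.trans (cycleOf_eq_of_mem hC hq), fun h => h ▸ hq⟩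

theorem ne_of_mem_of_mem_cycles (hC : C ∈ x.cycles) (hD : D ∈ x.cycles) (hne : C ≠ D)
    (hi : i ∈ C) (hj : j ∈ D) : i ≠ j := by
  rintro rfl
  exact hne ((cycleOf_eq_of_mem hC hi).symm.trans (cycleOf_eq_of_mem hD hj))

theorem sum_single_of_mem_cycles (hC : C ∈ x.cycles) (hD : D ∈ x.cycles) (hq : q ∈ C)
    (a : ZMod m) : ∑ k ∈ D, Pi.single q a k = if D = C then a else 0 := by
  rw [sum_pi_single', if_congr (mem_iff_eq_of_mem_cycles hC hD hq) rfl rfl]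

theorem c0_add_ite_of_perm_eq (hperm : y.perm = x.perm) (hD : D ∈ x.cycles)
    (hwt : ∀ C ∈ x.cycles, C ≠ D → cycWt y C = cycWt x C) :
    c0 y + (if cycWt x D = 0 then 1 else 0) = c0 x + (if cycWt y D = 0 then 1 else 0) := by
  rw [c0_eq_sum, c0_eq_sum, cycles_eq_of_perm_eq hperm, ← add_sum_erase _ _ hD,
    ← add_sum_erase _ _ hD, sum_congr rfl fun C hC => by rw [hwt C (mem_of_mem_erase hC)
      (ne_of_mem_erase hC)]]
  ring

theorem c0_diag_single_mul_add (x : GW m n) (q : Fin n) (c : ZMod m) :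
    c0 (diag (Pi.single q c) * x) + (if cycWt x (x.cycleOf q) = 0 then 1 else 0) =
      c0 x + (if cycWt x (x.cycleOf q) + c = 0 then 1 else 0) := by
  have hq := cycleOf_mem_cycles x q
  have hwt : ∀ C ∈ x.cycles, cycWt (diag (Pi.single q c) * x) C =
      (if C = x.cycleOf q then c else 0) + cycWt x C := fun C hC => by
    rw [cycWt_diag_mul, sum_single_of_mem_cycles hq hC (mem_cycleOf_self x q)]
  refine (c0_add_ite_of_perm_eq (diag_mul_perm _ x) hq fun C hC hne => ?_).trans ?_
  · rw [hwt C hC, if_neg hne, zero_add]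
  · rw [hwt _ hq, if_pos rfl, add_comm c]

theorem c0_le_c0_diag_single_mul_add_one (x : GW m n) (q : Fin n) (c : ZMod m) :
    c0 x ≤ c0 (diag (Pi.single q c) * x) + 1 := by
  have := c0_diag_single_mul_add x q c
  split_ifs at this <;> omega

/-- Together with `diag (Pi.single q c)`, `c ≠ 0`, these (for `i ≠ j`) are the reflections of
`G(m,1,n)`. -/
def swapWt (i j : Fin n) (β : ZMod m) : GW m n :=
  ⟨swap i j, (Pi.single i β - Pi.single j β : Fin n → ZMod m)⟩

@[simp] theorem swapWt_perm (i j : Fin n) (β : ZMod m) :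
    (swapWt i j β : GW m n).perm = swap i j := rfl

@[simp] theorem swapWt_mul_perm (i j : Fin n) (β : ZMod m) (x : GW m n) :
    (swapWt i j β * x).perm = swap i j * x.perm := rfl

theorem swapWt_mul_wt (i j : Fin n) (β : ZMod m) (x : GW m n) (k : Fin n) :
    (swapWt i j β * x).wt k =
      (Pi.single i β : Fin n → ZMod m) k - (Pi.single j β : Fin n → ZMod m) k +
        x.wt (swap i j k) := by
  simp [swapWt, swap_inv]

theorem swapWt_mul_swapWt (i j : Fin n) (β : ZMod m) :
    swapWt i j β * swapWt i j β = (1 : GW m n) := by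
  ext k
  · simp [swapWt]
  · rw [swapWt_mul_wt]
    rcases eq_or_ne k i with rfl | hki
    · rcases eq_or_ne k j with rfl | hkj <;> simp [swapWt, *]
    rcases eq_or_ne k j with rfl | hkj
    · simp [swapWt, hki]
    · simp [swapWt, hki, hkj, swap_apply_of_ne_of_ne hki hkj]

theorem swapWt_mul_swapWt_zero (i j : Fin n) (a : ZMod m) :
    swapWt i j a * swapWt i j 0 = (diag (Pi.single i a - Pi.single j a) : GW m n) := by
  ext <;> simp [swapWt, diag]

theorem cycWt_swapWt_mul (h : i ∈ C ↔ j ∈ C) (β : ZMod m) (x : GW m n) :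
    cycWt (swapWt i j β * x) C = cycWt x C := by
  have hswap : ∑ k ∈ C, x.wt (swap i j k) = cycWt x C := by
    by_cases hi : i ∈ C
    · refine Perm.sum_comp _ _ _ fun k hk => ?_
      by_contra hkC
      have hki : k ≠ i := by rintro rfl; exact hkC hi
      have hkj : k ≠ j := by rintro rfl; exact hkC (h.1 hi)
      exact hk (swap_apply_of_ne_of_ne hki hkj)
    · refine sum_congr rfl fun k hk => ?_
      have hki : k ≠ i := by rintro rfl; exact hi hk
      have hkj : k ≠ j := by rintro rfl; exact hi (h.2 hk)
      rw [swap_apply_of_ne_of_ne hki hkj]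
  simp only [cycWt, swapWt_mul_wt, sum_add_distrib, sum_sub_distrib, sum_pi_single', hswap,
    if_congr h rfl rfl, sub_self, zero_add]

theorem cycleOf_swapWt_mul_of_not_sameCycle (hi : ¬x.perm.SameCycle k i)
    (hj : ¬x.perm.SameCycle k j) (β : ZMod m) : (swapWt i j β * x).cycleOf k = x.cycleOf k := by
  ext l
  simp only [mem_cycleOf, swapWt_mul_perm, Perm.sameCycle_swap_mul_iff_of_not_sameCycle hi hj]

theorem cycleOf_swapWt_mul_self (h : ¬x.perm.SameCycle i j) (β : ZMod m) :
    (swapWt i j β * x).cycleOf i = x.cycleOf i ∪ x.cycleOf j := by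
  ext l
  simp only [mem_cycleOf, swapWt_mul_perm, Perm.sameCycle_swap_mul_iff h, mem_union]

theorem cycles_swapWt_mul (h : ¬x.perm.SameCycle i j) (β : ZMod m) :
    (swapWt i j β * x).cycles =
      insert (x.cycleOf i ∪ x.cycleOf j) ((x.cycles.erase (x.cycleOf i)).erase (x.cycleOf j)) := by
  ext D
  simp only [mem_insert, mem_erase, mem_cycles]
  constructor
  · rintro ⟨k, rfl⟩
    by_cases hk : x.perm.SameCycle i k ∨ x.perm.SameCycle j k
    · left
      rw [← cycleOf_swapWt_mul_self h β, cycleOf_eq_cycleOf_iff, swapWt_mul_perm]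
      exact ((Perm.sameCycle_swap_mul_iff h).2 hk).symm
    · rw [not_or] at hk
      right
      rw [cycleOf_swapWt_mul_of_not_sameCycle (fun e => hk.1 e.symm) (fun e => hk.2 e.symm),
        Ne, Ne, cycleOf_eq_cycleOf_iff, cycleOf_eq_cycleOf_iff]
      exact ⟨fun e => hk.2 e.symm, fun e => hk.1 e.symm, k, rfl⟩
  · rintro (rfl | ⟨hj, hi, k, rfl⟩)
    · exact ⟨i, cycleOf_swapWt_mul_self h β⟩
    · rw [Ne, cycleOf_eq_cycleOf_iff] at hi hj
      exact ⟨k, cycleOf_swapWt_mul_of_not_sameCycle hi hj β⟩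

theorem cycWt_swapWt_mul_cycleOf_self (h : ¬x.perm.SameCycle i j) (β : ZMod m) :
    cycWt (swapWt i j β * x) ((swapWt i j β * x).cycleOf i) =
      cycWt x (x.cycleOf i) + cycWt x (x.cycleOf j) := by
  have hdisj : Disjoint (x.cycleOf i) (x.cycleOf j) := disjoint_left.2 fun k hi hj =>
    h ((mem_cycleOf.1 hi).trans (mem_cycleOf.1 hj).symm)
  rw [cycleOf_swapWt_mul_self h, cycWt_swapWt_mul (iff_of_true
    (mem_union_left _ (mem_cycleOf_self x i)) (mem_union_right _ (mem_cycleOf_self x j))),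
    cycWt, sum_union hdisj]
  rfl

theorem cycWt_swapWt_mul_cycleOf_of_not_sameCycle (hi : ¬x.perm.SameCycle k i)
    (hj : ¬x.perm.SameCycle k j) (β : ZMod m) :
    cycWt (swapWt i j β * x) ((swapWt i j β * x).cycleOf k) = cycWt x (x.cycleOf k) := by
  rw [cycleOf_swapWt_mul_of_not_sameCycle hi hj, cycWt_swapWt_mul
    (iff_of_false (fun e => hi (mem_cycleOf.1 e)) fun e => hj (mem_cycleOf.1 e))]

/-- The cycles through `i` and `j` merge into one cycle whose weight is the sum of theirs. -/
theorem c0_swapWt_mul_add (h : ¬x.perm.SameCycle i j) (β : ZMod m) :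
    c0 (swapWt i j β * x) + (if cycWt x (x.cycleOf i) = 0 then 1 else 0) +
        (if cycWt x (x.cycleOf j) = 0 then 1 else 0) =
      c0 x + (if cycWt x (x.cycleOf i) + cycWt x (x.cycleOf j) = 0 then 1 else 0) := by
  set R := (x.cycles.erase (x.cycleOf i)).erase (x.cycleOf j)
  have hCj : x.cycleOf j ∈ x.cycles.erase (x.cycleOf i) :=
    mem_erase.2 ⟨fun e => h (cycleOf_eq_cycleOf_iff.1 e.symm), cycleOf_mem_cycles x j⟩
  have hU : x.cycleOf i ∪ x.cycleOf j ∉ R := fun hU => by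
    have hUi := cycleOf_eq_of_mem (mem_of_mem_erase (mem_of_mem_erase hU))
      (mem_union_left _ (mem_cycleOf_self x i))
    exact ne_of_mem_erase (mem_of_mem_erase hU) hUi.symm
  have hR : ∀ D ∈ R, cycWt (swapWt i j β * x) D = cycWt x D := fun D hD => by
    have hDx := mem_of_mem_erase (mem_of_mem_erase hD)
    refine cycWt_swapWt_mul (iff_of_false (fun hi => ?_) fun hj => ?_) β x
    · exact ne_of_mem_erase (mem_of_mem_erase hD) (cycleOf_eq_of_mem hDx hi).symm
    · exact ne_of_mem_erase hD (cycleOf_eq_of_mem hDx hj).symm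
  have hUwt := cycWt_swapWt_mul_cycleOf_self h β
  rw [cycleOf_swapWt_mul_self h] at hUwt
  rw [c0_eq_sum, cycles_swapWt_mul h, sum_insert hU, hUwt, sum_congr rfl fun D hD => by
    rw [hR D hD], c0_eq_sum x, ← add_sum_erase _ _ (cycleOf_mem_cycles x i),
    ← add_sum_erase _ _ hCj]
  ring

theorem cycleOf_eq_singleton (h : x.perm i = i) : x.cycleOf i = {i} := by
  ext k
  rw [mem_cycleOf, mem_singleton]
  exact ⟨fun hk => (hk.eq_of_left h).symm, fun hk => hk ▸ .rfl⟩

/-- Left multiplication by a suitable transposition cuts `i` out of its cycle as a fixed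
point of weight `0`. -/
theorem exists_eq_swapWt_mul (hi : x.perm i ≠ i) :
    ∃ β y, x = swapWt i (x.perm i) β * y ∧ c0 y = c0 x + 1 ∧
      ((∀ C ∈ x.cycles, cycWt x C = 0) → ∀ C ∈ y.cycles, cycWt y C = 0) := by
  set j := x.perm i
  set t : GW m n := swapWt i j (-x.wt j)
  set y := t * x
  have hx : x = t * y := by rw [← mul_assoc, swapWt_mul_swapWt, one_mul]
  have hyi : y.perm i = i := by simp [y, t, j]
  have hwi : cycWt y (y.cycleOf i) = 0 := by
    rw [cycleOf_eq_singleton hyi, cycWt, sum_singleton]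
    change (swapWt i j (-x.wt j) * x).wt i = 0
    rw [swapWt_mul_wt, swap_apply_left]
    simp [Ne.symm hi]
  have hsep : ¬y.perm.SameCycle i j := fun h => hi (h.eq_of_left hyi).symm
  refine ⟨-x.wt j, y, hx, ?_, fun hzero C hC => ?_⟩
  · have := c0_swapWt_mul_add hsep (-x.wt j)
    rw [← hx, hwi, if_pos rfl, zero_add] at this
    omega
  obtain ⟨k, rfl⟩ := mem_cycles.1 hC
  by_cases hik : y.perm.SameCycle k i
  · rw [cycleOf_eq_cycleOf_iff.2 hik, hwi]
  by_cases hjk : y.perm.SameCycle k j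
  · have hU := hzero _ (cycleOf_mem_cycles x i)
    rw [hx, cycWt_swapWt_mul_cycleOf_self hsep, hwi, zero_add] at hU
    rwa [cycleOf_eq_cycleOf_iff.2 hjk]
  · rw [← cycWt_swapWt_mul_cycleOf_of_not_sameCycle hik hjk (-x.wt j), ← hx]
    exact hzero _ (cycleOf_mem_cycles x k)

theorem codimfix_swapWt (hij : i ≠ j) (β : ZMod m) : codimfix (swapWt i j β : GW m n) = 1 := by
  have := c0_swapWt_mul_add (x := (1 : GW m n)) (by simpa [Perm.sameCycle_one] using hij) β
  simp only [mul_one, cycleOf_one, cycWt, sum_singleton, one_wt, add_zero, if_pos,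
    c0_one] at this
  rw [codimfix]
  omega

theorem codimfix_diag_single {c : ZMod m} (hc : c ≠ 0) (q : Fin n) :
    codimfix (diag (Pi.single q c) : GW m n) = 1 := by
  have := c0_diag_single_mul_add (1 : GW m n) q c
  simp only [mul_one, cycleOf_one, cycWt, sum_singleton, one_wt, zero_add, if_pos, if_neg hc,
    c0_one] at this
  rw [codimfix]
  omega

theorem c0_le_c0_swapWt_mul_add_one (i j : Fin n) (β : ZMod m) (x : GW m n) :
    c0 x ≤ c0 (swapWt i j β * x) + 1 := by
  by_cases h : x.perm.SameCycle i j
  · have hsub : (x.cycles.filter fun C => cycWt x C = 0).erase (x.cycleOf i) ⊆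
        (swapWt i j β * x).cycles.filter fun C => cycWt (swapWt i j β * x) C = 0 := by
      intro D hD
      obtain ⟨hne, hD⟩ := mem_erase.1 hD
      obtain ⟨hDc, hDw⟩ := mem_filter.1 hD
      obtain ⟨k, rfl⟩ := mem_cycles.1 hDc
      have hki : ¬x.perm.SameCycle k i := fun e => hne (cycleOf_eq_cycleOf_iff.2 e)
      have hkj : ¬x.perm.SameCycle k j := fun e => hki (e.trans h.symm)
      rw [← cycleOf_swapWt_mul_of_not_sameCycle hki hkj β, mem_filter,
        cycWt_swapWt_mul_cycleOf_of_not_sameCycle hki hkj]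
      exact ⟨cycleOf_mem_cycles _ k, hDw⟩
    have := card_le_card hsub
    have := pred_card_le_card_erase (s := x.cycles.filter fun C => cycWt x C = 0)
      (a := x.cycleOf i)
    rw [c0, c0]
    omega
  · have := c0_swapWt_mul_add h β
    split_ifs at this <;> first | omega | simp_all

theorem exists_eq_mul_c0_eq_add_one (hx : x ≠ 1) :
    ∃ t y, x = t * y ∧ c0 y = c0 x + 1 ∧ ∀ z, c0 z ≤ c0 (t * z) + 1 := by
  by_cases hp : ∃ i, x.perm i ≠ i
  · obtain ⟨i, hi⟩ := hp
    obtain ⟨β, y, hxy, hc0, -⟩ := exists_eq_swapWt_mul hi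
    exact ⟨_, y, hxy, hc0, c0_le_c0_swapWt_mul_add_one _ _ β⟩
  simp only [ne_eq, not_exists, not_not] at hp
  obtain ⟨q, hq⟩ : ∃ q, x.wt q ≠ 0 := by
    by_contra h
    simp only [ne_eq, not_exists, not_not] at h
    exact hx (GW.ext (Equiv.ext hp) (funext h))
  refine ⟨diag (Pi.single q (x.wt q)), diag (Pi.single q (-x.wt q)) * x, ?_, ?_,
    (c0_le_c0_diag_single_mul_add_one · q _)⟩
  · rw [diag_mul_diag_mul, ← Pi.single_add, add_neg_cancel, Pi.single_zero, diag_zero, one_mul]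
  · have := c0_diag_single_mul_add x q (-x.wt q)
    rw [cycleOf_eq_singleton (hp q), cycWt, sum_singleton, if_neg hq,
      if_pos (add_neg_cancel _)] at this
    omega

theorem c0_add_c0_le (x y : GW m n) : c0 x + c0 y ≤ n + c0 (x * y) := by
  by_cases hx : x = 1
  · rw [hx, c0_one, one_mul]
  obtain ⟨t, x', hxt, hc0, ht⟩ := exists_eq_mul_c0_eq_add_one hx
  have := c0_add_c0_le x' y
  have := ht (x' * y)
  have hxy : x * y = t * (x' * y) := by rw [hxt, mul_assoc]
  rw [hxy]
  omega
termination_by n - c0 x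
decreasing_by have := c0_le x'; omega

theorem codimfix_mul_le (x y : GW m n) : codimfix (x * y) ≤ codimfix x + codimfix y := by
  have := c0_add_c0_le x y
  have := c0_le x
  have := c0_le y
  simp only [codimfix]
  omega

variable {p : ℕ} {hpm : p ∣ m} {u v w : GW m n}

theorem Gmem_mul (hx : Gmem p hpm x) (hy : Gmem p hpm y) : Gmem p hpm (x * y) := by
  rw [Gmem, wtTot_mul, map_add, hx, hy, add_zero]

theorem Gmem_inv (hx : Gmem p hpm x) : Gmem p hpm x⁻¹ := by
  rw [Gmem, wtTot_inv, map_neg, hx, neg_zero]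

theorem isRefl_swapWt (hij : i ≠ j) (β : ZMod m) : IsRefl p hpm (swapWt i j β : GW m n) := by
  refine ⟨?_, codimfix_swapWt hij β⟩
  simp [Gmem, wtTot, swapWt, sum_sub_distrib]

theorem isRefl_diag_single {c : ZMod m} (hc : c ≠ 0) (hcp : ZMod.castHom hpm (ZMod p) c = 0)
    (q : Fin n) : IsRefl p hpm (diag (Pi.single q c) : GW m n) :=
  ⟨by simpa [Gmem, wtTot_diag] using hcp, codimfix_diag_single hc q⟩

/-- By definition, `lR p hpm x` is the least `k` with `HasReflFactorization p hpm k x`. -/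
def HasReflFactorization (p : ℕ) (hpm : p ∣ m) (k : ℕ) (x : GW m n) : Prop :=
  ∃ l : List (GW m n), (∀ t ∈ l, IsRefl p hpm t) ∧ l.length = k ∧ l.prod = x

namespace HasReflFactorization

variable {k l : ℕ}

theorem one : HasReflFactorization p hpm 0 (1 : GW m n) :=
  ⟨[], by simp, rfl, rfl⟩

theorem of_isRefl (hx : IsRefl p hpm x) : HasReflFactorization p hpm 1 x :=
  ⟨[x], by simpa using hx, rfl, by simp⟩

theorem mul (hx : HasReflFactorization p hpm k x) (hy : HasReflFactorization p hpm l y) :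
    HasReflFactorization p hpm (k + l) (x * y) := by
  obtain ⟨lx, hlx, rfl, rfl⟩ := hx
  obtain ⟨ly, hly, rfl, rfl⟩ := hy
  refine ⟨lx ++ ly, fun t ht => ?_, by simp, by simp⟩
  rcases List.mem_append.1 ht with ht | ht
  exacts [hlx t ht, hly t ht]

theorem codimfix_le (h : HasReflFactorization p hpm k x) : codimfix x ≤ k := by
  obtain ⟨l, hl, rfl, rfl⟩ := h
  induction l with
  | nil => simp [codimfix_one]
  | cons t l ih =>
    have := codimfix_mul_le t l.prod
    have := (hl t List.mem_cons_self).2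
    have := ih fun s hs => hl s (List.mem_cons_of_mem t hs)
    rw [List.prod_cons, List.length_cons]
    omega

theorem lR_le (h : HasReflFactorization p hpm k x) : lR p hpm x ≤ k :=
  Nat.sInf_le h

theorem codimfix_le_lR (h : HasReflFactorization p hpm k x) : codimfix x ≤ lR p hpm x :=
  codimfix_le (Nat.sInf_mem (s := {k | HasReflFactorization p hpm k x}) ⟨k, h⟩)

theorem lR_eq_codimfix (h : HasReflFactorization p hpm (codimfix x) x) :
    lR p hpm x = codimfix x :=
  le_antisymm h.lR_le h.codimfix_le_lR

end HasReflFactorization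

open HasReflFactorization

theorem hasReflFactorization_diag_single_sub_single (hij : i ≠ j) (a : ZMod m) :
    HasReflFactorization p hpm 2 (diag (Pi.single i a - Pi.single j a) : GW m n) := by
  rw [← swapWt_mul_swapWt_zero]
  exact (of_isRefl (isRefl_swapWt hij a)).mul (of_isRefl (isRefl_swapWt hij 0))

theorem hasReflFactorization_of_forall_cycWt_eq_zero {x : GW m n}
    (h : ∀ C ∈ x.cycles, cycWt x C = 0) :
    HasReflFactorization p hpm (codimfix x) x := by
  by_cases hp : ∃ i, x.perm i ≠ i
  · obtain ⟨i, hi⟩ := hp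
    obtain ⟨β, y, hxy, hc0, hy⟩ := exists_eq_swapWt_mul hi
    have hcod : codimfix x = 1 + codimfix y := by
      have := c0_le y
      simp only [codimfix]
      omega
    have := hasReflFactorization_of_forall_cycWt_eq_zero (hy h)
    rw [hcod, hxy]
    exact (of_isRefl (isRefl_swapWt (Ne.symm hi) β)).mul this
  · simp only [ne_eq, not_exists, not_not] at hp
    have hx : x = 1 := GW.ext (Equiv.ext hp) (funext fun q => by
      simpa [cycleOf_eq_singleton (hp q), cycWt] using h _ (cycleOf_mem_cycles x q))
    rw [hx, codimfix_one]
    exact one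
termination_by codimfix x
decreasing_by omega

theorem exists_isPairing_of_pairedUp {S : Finset (Finset (Fin n))} (h : PairedUp p hpm w S) :
    ∃ π, IsPairing hpm (cycWt w) S π := by
  classical
  obtain ⟨π, hinv, hfix, hne⟩ := h
  refine ⟨fun C => if hC : C ∈ S then (π ⟨C, hC⟩).1 else C, ⟨fun C hC => ?_, fun C hC => ?_,
    fun C hC h => ?_, fun C hC h => ?_⟩⟩
  · rw [dif_pos hC]
    exact (π ⟨C, hC⟩).2
  · rw [dif_pos hC, dif_pos (π ⟨C, hC⟩).2]
    exact congrArg Subtype.val (hinv ⟨C, hC⟩)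
  · rw [dif_pos hC] at h
    exact hfix ⟨C, hC⟩ (Subtype.ext h)
  · rw [dif_pos hC] at h ⊢
    exact hne ⟨C, hC⟩ fun e => h (congrArg Subtype.val e)

def nzCycles (x : GW m n) : Finset (Finset (Fin n)) :=
  x.cycles.filter fun C => cycWt x C ≠ 0

theorem mem_nzCycles : C ∈ nzCycles x ↔ C ∈ x.cycles ∧ cycWt x C ≠ 0 :=
  mem_filter

theorem c0_add_card_nzCycles (x : GW m n) : c0 x + (nzCycles x).card = x.cycles.card :=
  card_filter_add_card_filter_not _

theorem sum_nzCycles (x : GW m n) : ∑ C ∈ nzCycles x, cycWt x C = wtTot x := by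
  rw [nzCycles, sum_filter_ne_zero, sum_cycWt]

theorem nzCycles_inv (x : GW m n) : nzCycles x⁻¹ = nzCycles x := by
  rw [nzCycles, nzCycles, cycles_inv]
  exact filter_congr fun C hC => by rw [cycWt_inv hC, neg_ne_zero]

theorem nzCycles_eq_sdiff (hperm : y.perm = x.perm) {Z : Finset (Finset (Fin n))}
    (hwt : ∀ C ∈ x.cycles, cycWt y C = if C ∈ Z then 0 else cycWt x C) :
    nzCycles y = nzCycles x \ Z := by
  ext C
  simp only [mem_sdiff, mem_nzCycles, cycles_eq_of_perm_eq hperm]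
  refine ⟨fun ⟨hC, hw⟩ => ?_, fun ⟨⟨hC, hw⟩, hZ⟩ => ⟨hC, by rwa [hwt C hC, if_neg hZ]⟩⟩
  rw [hwt C hC] at hw
  split_ifs at hw with hZ
  exacts [absurd rfl hw, ⟨⟨hC, hw⟩, hZ⟩]

theorem c0_eq_add_card (hperm : y.perm = x.perm) {Z : Finset (Finset (Fin n))}
    (hZ : Z ⊆ nzCycles x) (hwt : ∀ C ∈ x.cycles, cycWt y C = if C ∈ Z then 0 else cycWt x C) :
    c0 y = c0 x + Z.card := by
  have h := c0_add_card_nzCycles y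
  rw [nzCycles_eq_sdiff hperm hwt, card_sdiff_of_subset hZ, cycles_eq_of_perm_eq hperm] at h
  have := c0_add_card_nzCycles x
  have := card_le_card hZ
  omega

theorem cycWt_diag_neg_mul (f : Fin n → ZMod m) (x : GW m n) (D : Finset (Fin n)) :
    cycWt (diag (-f) * x) D = cycWt x D - ∑ k ∈ D, f k := by
  rw [cycWt_diag_mul]
  simp only [Pi.neg_apply, sum_neg_distrib]
  ring

theorem cycWt_diag_neg_single_cycWt_mul (hC : C ∈ x.cycles) (hq : q ∈ C) (hD : D ∈ x.cycles) :
    cycWt (diag (-Pi.single q (cycWt x C)) * x) D =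
      if D ∈ ({C} : Finset (Finset (Fin n))) then 0 else cycWt x D := by
  rw [cycWt_diag_neg_mul, sum_single_of_mem_cycles hC hD hq]
  by_cases h : D = C <;> simp [h]

theorem cycWt_diag_neg_single_add_single_cycWt_mul (hC : C ∈ x.cycles) (hC' : C' ∈ x.cycles)
    (hne : C ≠ C') (hq : q ∈ C) (hq' : q' ∈ C') (hD : D ∈ x.cycles) :
    cycWt (diag (-(Pi.single q (cycWt x C) + Pi.single q' (cycWt x C'))) * x) D =
      if D ∈ ({C, C'} : Finset (Finset (Fin n))) then 0 else cycWt x D := by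
  rw [cycWt_diag_neg_mul, Pi.add_def, sum_add_distrib, sum_single_of_mem_cycles hC hD hq,
    sum_single_of_mem_cycles hC' hD hq']
  by_cases h : D = C
  · simp [h, hne]
  by_cases h' : D = C'
  · simp [h', hne.symm]
  · simp [h, h']

theorem HasReflFactorization.of_diag_neg_mul {f : Fin n → ZMod m} {Z : Finset (Finset (Fin n))}
    (hZ : Z ⊆ nzCycles x)
    (hwt : ∀ C ∈ x.cycles, cycWt (diag (-f) * x) C = if C ∈ Z then 0 else cycWt x C)
    (hf : HasReflFactorization p hpm Z.card (diag f))
    (h : HasReflFactorization p hpm (codimfix (diag (-f) * x)) (diag (-f) * x)) :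
    HasReflFactorization p hpm (codimfix x) x := by
  have hc0 := c0_eq_add_card (diag_mul_perm _ x) hZ hwt
  have := c0_le (diag (-f) * x)
  have hcod : codimfix x = Z.card + codimfix (diag (-f) * x) := by
    simp only [codimfix]
    omega
  have := hf.mul h
  rwa [← eq_diag_mul_diag_neg_mul, ← hcod] at this

/-- A fixed point `C` of `π` is zeroed by one diagonal reflection, a pair `{C, π C}` by two
transpositions. -/
theorem exists_zeroing_of_isPairing {π : Finset (Fin n) → Finset (Fin n)}
    (hπ : IsPairing hpm (cycWt x) (nzCycles x) π) (hC : C ∈ nzCycles x) :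
    ∃ (f : Fin n → ZMod m) (Z : Finset (Finset (Fin n))), C ∈ Z ∧ Z ⊆ nzCycles x ∧
      (∀ D ∈ nzCycles x, D ∈ Z → π D ∈ Z) ∧
      (∀ D ∈ x.cycles, cycWt (diag (-f) * x) D = if D ∈ Z then 0 else cycWt x D) ∧
      HasReflFactorization p hpm Z.card (diag f) := by
  obtain ⟨hCx, ha⟩ := mem_nzCycles.1 hC
  obtain ⟨q, hq⟩ := nonempty_of_mem_cycles hCx
  by_cases hfix : π C = C
  · refine ⟨_, {C}, mem_singleton_self C, singleton_subset_iff.2 hC, fun D _ hD => ?_,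
      fun D hD => cycWt_diag_neg_single_cycWt_mul hCx hq hD,
      of_isRefl (isRefl_diag_single ha (hπ.cast_eq_zero C hC hfix) q)⟩
    rw [mem_singleton] at hD ⊢
    rw [hD, hfix]
  obtain ⟨hC'x, -⟩ := mem_nzCycles.1 (hπ.mapsTo C hC)
  obtain ⟨q', hq'⟩ := nonempty_of_mem_cycles hC'x
  refine ⟨_, {C, π C}, mem_insert_self _ _,
    insert_subset hC (singleton_subset_iff.2 (hπ.mapsTo C hC)), fun D hD hDZ => ?_,
    fun D hD => cycWt_diag_neg_single_add_single_cycWt_mul hCx hC'x (Ne.symm hfix) hq hq' hD, ?_⟩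
  · simp only [mem_insert, mem_singleton] at hDZ ⊢
    rcases hDZ with h | h
    · exact Or.inr (by rw [h])
    · exact Or.inl (by rw [h, hπ.apply_apply C hC])
  · rw [card_pair (Ne.symm hfix), eq_neg_of_add_eq_zero_right (hπ.add_eq_zero C hC hfix),
      Pi.single_neg, ← sub_eq_add_neg]
    exact hasReflFactorization_diag_single_sub_single
      (ne_of_mem_of_mem_cycles hCx hC'x (Ne.symm hfix) hq hq') _

theorem hasReflFactorization_of_isPairing {x : GW m n} {π : Finset (Fin n) → Finset (Fin n)}
    (hπ : IsPairing hpm (cycWt x) (nzCycles x) π) :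
    HasReflFactorization p hpm (codimfix x) x := by
  obtain hnz | ⟨C, hC⟩ := (nzCycles x).eq_empty_or_nonempty
  · refine hasReflFactorization_of_forall_cycWt_eq_zero fun C hC => ?_
    by_contra hw
    simpa [hnz] using mem_nzCycles.2 ⟨hC, hw⟩
  obtain ⟨f, Z, hCZ, hZ, hZπ, hwt, hf⟩ := exists_zeroing_of_isPairing hπ hC
  have hnz := nzCycles_eq_sdiff (diag_mul_perm _ x) hwt
  have hlt : (nzCycles (diag (-f) * x)).card < (nzCycles x).card := by
    rw [hnz]
    exact card_lt_card (sdiff_ssubset hZ ⟨C, hCZ⟩)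
  refine of_diag_neg_mul hZ hwt hf (hasReflFactorization_of_isPairing (π := π) ?_)
  rw [hnz]
  exact hπ.sdiff hZπ fun D hD => by
    rw [hwt D (mem_nzCycles.1 (mem_sdiff.1 hD).1).1, if_neg (mem_sdiff.1 hD).2]
termination_by (nzCycles x).card
decreasing_by exact hlt

/-- Two transpositions move the weight of `C` onto `C'`. -/
theorem exists_nzCycles_diag_neg_mul_subset_erase (hC : C ∈ nzCycles x) (hC' : C' ∈ nzCycles x)
    (hne : C ≠ C') :
    ∃ f : Fin n → ZMod m, HasReflFactorization p hpm 2 (diag f) ∧ ∑ k, f k = 0 ∧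
      nzCycles (diag (-f) * x) ⊆ (nzCycles x).erase C := by
  obtain ⟨hCx, -⟩ := mem_nzCycles.1 hC
  obtain ⟨hC'x, -⟩ := mem_nzCycles.1 hC'
  obtain ⟨q, hq⟩ := nonempty_of_mem_cycles hCx
  obtain ⟨q', hq'⟩ := nonempty_of_mem_cycles hC'x
  refine ⟨_, hasReflFactorization_diag_single_sub_single
    (ne_of_mem_of_mem_cycles hCx hC'x hne hq hq') (cycWt x C), by simp, fun D hD => ?_⟩
  obtain ⟨hDx, hDw⟩ := mem_nzCycles.1 hD
  rw [cycles_eq_of_perm_eq (diag_mul_perm _ x)] at hDx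
  rw [cycWt_diag_neg_mul, Pi.sub_def, sum_sub_distrib, sum_single_of_mem_cycles hCx hDx hq,
    sum_single_of_mem_cycles hC'x hDx hq'] at hDw
  by_cases h : D = C
  · simp [h, hne] at hDw
  refine mem_erase.2 ⟨h, ?_⟩
  by_cases h' : D = C'
  · rwa [h']
  · exact mem_nzCycles.2 ⟨hDx, by simpa [h, h'] using hDw⟩

/-- Move all nonzero weights onto one cycle; its weight is then the total weight, `0 (mod p)`. -/
theorem exists_hasReflFactorization {x : GW m n} (hx : Gmem p hpm x) :
    ∃ k, HasReflFactorization p hpm k x := by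
  by_cases h1 : (nzCycles x).card ≤ 1
  · refine ⟨_, hasReflFactorization_of_isPairing (π := id)
      ⟨fun C hC => hC, fun _ _ => rfl, fun C hC _ => ?_, fun C _ h => absurd rfl h⟩⟩
    have : nzCycles x = {C} :=
      eq_singleton_iff_unique_mem.2 ⟨hC, fun D hD => card_le_one.1 h1 D hD C hC⟩
    rwa [Gmem, ← sum_nzCycles, this, sum_singleton] at hx
  obtain ⟨C, hC, C', hC', hne⟩ := one_lt_card.1 (not_le.1 h1)
  obtain ⟨f, hf, hsum, hsub⟩ := exists_nzCycles_diag_neg_mul_subset_erase (p := p) (hpm := hpm)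
    hC hC' hne
  have hlt : (nzCycles (diag (-f) * x)).card < (nzCycles x).card :=
    (card_le_card hsub).trans_lt (card_erase_lt_of_mem hC)
  have hx' : Gmem p hpm (diag (-f) * x) := by
    rw [Gmem] at hx ⊢
    rwa [wtTot_mul, wtTot_diag, Pi.neg_def, sum_neg_distrib, hsum, neg_zero, zero_add]
  obtain ⟨k, hk⟩ := exists_hasReflFactorization hx'
  exact ⟨2 + k, by simpa only [← eq_diag_mul_diag_neg_mul] using hf.mul hk⟩
termination_by (nzCycles x).card
decreasing_by exact hlt

theorem codimfix_le_lR (hx : Gmem p hpm x) : codimfix x ≤ lR p hpm x :=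
  (exists_hasReflFactorization hx).elim fun _ hk => hk.codimfix_le_lR

theorem c0_add_c0_eq_of_codimfix_add_eq (h : codimfix u + codimfix v = codimfix (u * v)) :
    c0 u + c0 v = n + c0 (u * v) := by
  have := c0_add_c0_le u v
  have := c0_le u
  have := c0_le v
  have := c0_le (u * v)
  simp only [codimfix] at h
  omega

/-- Zeroing the weight of `C` raises `c0 u` by one, so additivity of `codimfix` forces `c0` of the
correspondingly modified `u * v` to rise too, which pins down the weight of its cycle through `q`. -/
theorem cycWt_cycleOf_mul_of_codimfix_add_eq (h : codimfix u + codimfix v = codimfix (u * v))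
    (hC : C ∈ nzCycles u) (hq : q ∈ C) :
    cycWt (u * v) ((u * v).cycleOf q) = cycWt u C := by
  obtain ⟨hCu, -⟩ := mem_nzCycles.1 hC
  have hu : c0 (diag (-Pi.single q (cycWt u C)) * u) = c0 u + 1 := by
    simpa using c0_eq_add_card (diag_mul_perm _ u) (singleton_subset_iff.2 hC) fun D hD =>
      cycWt_diag_neg_single_cycWt_mul hCu hq hD
  have hsub := c0_add_c0_le (diag (-Pi.single q (cycWt u C)) * u) v
  rw [mul_assoc, hu] at hsub
  have huv := c0_diag_single_mul_add (u * v) q (-cycWt u C)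
  rw [Pi.single_neg] at huv
  have := c0_add_c0_eq_of_codimfix_add_eq h
  by_contra hne
  have hne' : ¬cycWt (u * v) ((u * v).cycleOf q) + -cycWt u C = 0 := fun e =>
    hne (by linear_combination e)
  rw [if_neg hne'] at huv
  split_ifs at huv <;> omega

/-- Zeroing two cycles of `u` meeting the same cycle of `u * v` would raise `c0 u` by two but leave
`c0 (u * v)` unchanged. -/
theorem cycleOf_mul_ne_of_codimfix_add_eq (h : codimfix u + codimfix v = codimfix (u * v))
    (hC : C ∈ nzCycles u) (hC' : C' ∈ nzCycles u) (hne : C ≠ C') (hq : q ∈ C)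
    (hq' : q' ∈ C') : (u * v).cycleOf q ≠ (u * v).cycleOf q' := by
  intro hD
  obtain ⟨hCu, ha⟩ := mem_nzCycles.1 hC
  obtain ⟨hC'u, -⟩ := mem_nzCycles.1 hC'
  have hW := cycWt_cycleOf_mul_of_codimfix_add_eq h hC hq
  have ha' : cycWt u C' = cycWt u C := by
    rw [← cycWt_cycleOf_mul_of_codimfix_add_eq h hC' hq', ← hD, hW]
  set f : Fin n → ZMod m := Pi.single q (cycWt u C) + Pi.single q' (cycWt u C') with hf
  have hu : c0 (diag (-f) * u) = c0 u + 2 := by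
    have := c0_eq_add_card (diag_mul_perm _ u) (insert_subset hC (singleton_subset_iff.2 hC'))
      fun D hD => cycWt_diag_neg_single_add_single_cycWt_mul hCu hC'u hne hq hq' hD
    rwa [card_pair hne] at this
  have huv : c0 (diag (-f) * (u * v)) = c0 (u * v) := by
    have hDc := cycleOf_mem_cycles (u * v) q
    have hq'D : q' ∈ (u * v).cycleOf q := hD ▸ mem_cycleOf_self _ q'
    have hwt : ∀ D ∈ (u * v).cycles, cycWt (diag (-f) * (u * v)) D =
        cycWt (u * v) D - ((if D = (u * v).cycleOf q then cycWt u C else 0) +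
          (if D = (u * v).cycleOf q then cycWt u C' else 0)) := fun D hD => by
      rw [cycWt_diag_neg_mul, hf, Pi.add_def, sum_add_distrib,
        sum_single_of_mem_cycles hDc hD (mem_cycleOf_self _ q),
        sum_single_of_mem_cycles hDc hD hq'D]
    have := c0_add_ite_of_perm_eq (diag_mul_perm _ (u * v)) hDc fun D hD hne => by
      rw [hwt D hD, if_neg hne, if_neg hne, add_zero, sub_zero]
    have hW' : cycWt (u * v) ((u * v).cycleOf q) - (cycWt u C + cycWt u C') ≠ 0 := by
      rw [hW, ha']
      intro e
      exact ha (by linear_combination -e)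
    rw [hwt _ hDc, if_pos rfl, if_pos rfl, if_neg hW', hW, if_neg ha] at this
    omega
  have hsub := c0_add_c0_le (diag (-f) * u) v
  rw [mul_assoc, huv, hu] at hsub
  have := c0_add_c0_eq_of_codimfix_add_eq h
  omega

theorem exists_injOn_nzCycles_left (h : codimfix u + codimfix v = codimfix (u * v)) :
    ∃ φ : Finset (Fin n) → Finset (Fin n),
      (∀ C ∈ nzCycles u, φ C ∈ (u * v).cycles ∧ cycWt (u * v) (φ C) = cycWt u C) ∧
        Set.InjOn φ (nzCycles u) := by
  classical
  choose pt hpt using fun C (hC : C ∈ nzCycles u) => nonempty_of_mem_cycles (mem_nzCycles.1 hC).1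
  refine ⟨fun C => if hC : C ∈ nzCycles u then (u * v).cycleOf (pt C hC) else C,
    fun C hC => ?_, fun C hC C' hC' he => ?_⟩
  · simp only [dif_pos hC]
    exact ⟨cycleOf_mem_cycles _ _, cycWt_cycleOf_mul_of_codimfix_add_eq h hC (hpt C hC)⟩
  · rw [mem_coe] at hC hC'
    simp only [dif_pos hC, dif_pos hC'] at he
    by_contra hne
    exact cycleOf_mul_ne_of_codimfix_add_eq h hC hC' hne (hpt C hC) (hpt C' hC') he

theorem exists_injOn_nzCycles_right (h : codimfix u + codimfix v = codimfix (u * v)) :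
    ∃ φ : Finset (Fin n) → Finset (Fin n),
      (∀ C ∈ nzCycles v, φ C ∈ (u * v).cycles ∧ cycWt (u * v) (φ C) = cycWt v C) ∧
        Set.InjOn φ (nzCycles v) := by
  have h' : codimfix v⁻¹ + codimfix u⁻¹ = codimfix (v⁻¹ * u⁻¹) := by
    rw [← mul_inv_rev, codimfix_inv, codimfix_inv, codimfix_inv, add_comm, h]
  obtain ⟨φ, hφ, hinj⟩ := exists_injOn_nzCycles_left h'
  rw [← mul_inv_rev, nzCycles_inv] at hφ
  rw [nzCycles_inv] at hinj
  refine ⟨φ, fun C hC => ?_, hinj⟩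
  obtain ⟨hmem, hwt⟩ := hφ C hC
  rw [cycles_inv] at hmem
  rw [cycWt_inv hmem, cycWt_inv (mem_nzCycles.1 hC).1, neg_inj] at hwt
  exact ⟨hmem, hwt⟩

theorem lR_eq_codimfix_of_injOn
    (hsub : ∀ S ⊆ w.cycles, ZMod.castHom hpm (ZMod p) (partWt w S) = 0 → PairedUp p hpm w S)
    (hx : Gmem p hpm x) {φ : Finset (Fin n) → Finset (Fin n)}
    (hφ : ∀ C ∈ nzCycles x, φ C ∈ w.cycles ∧ cycWt w (φ C) = cycWt x C)
    (hinj : Set.InjOn φ (nzCycles x)) : lR p hpm x = codimfix x := by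
  classical
  have hS : (nzCycles x).image φ ⊆ w.cycles := fun D hD => by
    obtain ⟨C, hC, rfl⟩ := mem_image.1 hD
    exact (hφ C hC).1
  have hwt : partWt w ((nzCycles x).image φ) = wtTot x := by
    rw [partWt, sum_image hinj, ← sum_nzCycles]
    exact sum_congr rfl fun C hC => (hφ C hC).2
  obtain ⟨π', hπ'⟩ := exists_isPairing_of_pairedUp (hsub _ hS (by rw [hwt]; exact hx))
  obtain ⟨π, hπ⟩ := hπ'.comap hinj fun C hC => (hφ C hC).2
  exact (hasReflFactorization_of_isPairing hπ).lR_eq_codimfix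

end GW

theorem stmt11_general (m p n : ℕ) (hpm : p ∣ m)
    (w : GW m n) (hw : GW.Gmem p hpm w)
    (heq : GW.lR p hpm w = GW.codimfix w)
    (hsub : ∀ S ⊆ GW.cycles w, ZMod.castHom hpm (ZMod p) (GW.partWt w S) = 0 →
      GW.PairedUp p hpm w S) :
    GW.interval p hpm (GW.lR p hpm) w = GW.interval p hpm GW.codimfix w := by
  refine Set.ext fun u => and_congr_right fun hu => ?_
  have hv : GW.Gmem p hpm (u⁻¹ * w) := GW.Gmem_mul (GW.Gmem_inv hu) hw
  have hsubadd := GW.codimfix_mul_le u (u⁻¹ * w)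
  rw [mul_inv_cancel_left] at hsubadd
  rw [GW.leF, GW.leF]
  refine ⟨fun h => ?_, fun h => ?_⟩
  · have := GW.codimfix_le_lR hu
    have := GW.codimfix_le_lR hv
    omega
  · have h' : GW.codimfix u + GW.codimfix (u⁻¹ * w) = GW.codimfix (u * (u⁻¹ * w)) := by
      rwa [mul_inv_cancel_left]
    obtain ⟨φ, hφ, hφinj⟩ := GW.exists_injOn_nzCycles_left h'
    obtain ⟨ψ, hψ, hψinj⟩ := GW.exists_injOn_nzCycles_right h'
    rw [mul_inv_cancel_left] at hφ hψ
    rw [GW.lR_eq_codimfix_of_injOn hsub hu hφ hφinj, GW.lR_eq_codimfix_of_injOn hsub hv hψ hψinj,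
      heq, h]

/-- If `w ∈ G(m,p,n)` satisfies `ℓ_R(w) = codimfix(w)`, and every subset of the cycles
of `w` whose weights sum to `0 (mod p)` can be partitioned into singletons of weight
`0 (mod p)` and pairs of cycles whose weights sum to `0` in `ℤ/mℤ`, then
`[id, w]_{ℓ_R} = [id, w]_{cdf}`. -/
theorem stmt11 (m p n : ℕ) (hm : 0 < m) (hp : 0 < p) (hn : 0 < n) (hpm : p ∣ m)
    (w : GW m n) (hw : GW.Gmem p hpm w)
    (heq : GW.lR p hpm w = GW.codimfix w)
    (hsub : ∀ S ⊆ GW.cycles w, ZMod.castHom hpm (ZMod p) (GW.partWt w S) = 0 →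
      GW.PairedUp p hpm w S) :
    GW.interval p hpm (GW.lR p hpm) w = GW.interval p hpm GW.codimfix w :=
  stmt11_general m p n hpm w hw heq hsub
end

section
/- Let W ⊆ GL(V) be a finite complex reflection group and w ∈ W. Then the following two conditions are equivalent: (j) [id, u]_{ℓ_R} = [id, u]_{cdf} for every u with u ≤_{cdf} w and u ≠ w; (k) ℓ_R(u) = codimfix(u) for every u with u ≤_{cdf} w and u ≠ w. -/
namespace CRG

variable {V : Type*} [AddCommGroup V] [Module ℂ V] [FiniteDimensional ℂ V]

/-- The codimension of the fixed space of an invertible linear map `g` on `V`: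
`codimfix g = dim V − dim ker(g − 1)`. -/
noncomputable def cdf (g : (V →ₗ[ℂ] V)ˣ) : ℕ :=
  Module.finrank ℂ V - Module.finrank ℂ (LinearMap.ker ((g : V →ₗ[ℂ] V) - LinearMap.id))

/-- `t` is a reflection of the group `W ⊆ GL(V)`: an element of `W` whose fixed space has
codimension 1. -/
def IsRefl (W : Subgroup (V →ₗ[ℂ] V)ˣ) (t : (V →ₗ[ℂ] V)ˣ) : Prop :=
  t ∈ W ∧ cdf t = 1

/-- The reflection length of `w`: the least `k` such that `w` is a product of `k`
reflections of `W`. -/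
noncomputable def lR (W : Subgroup (V →ₗ[ℂ] V)ˣ) (w : (V →ₗ[ℂ] V)ˣ) : ℕ :=
  sInf {k | ∃ l : List (V →ₗ[ℂ] V)ˣ, (∀ t ∈ l, IsRefl W t) ∧ l.length = k ∧ l.prod = w}

/-- The order `≤_f` determined by a subadditive function `f`:
`x ≤_f y ↔ f x + f (x⁻¹y) = f y`. -/
def leF (f : (V →ₗ[ℂ] V)ˣ → ℕ) (x y : (V →ₗ[ℂ] V)ˣ) : Prop :=
  f x + f (x⁻¹ * y) = f y

/-- The interval `[id, w]_f` inside the poset `(W, ≤_f)`. -/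
def interval (W : Subgroup (V →ₗ[ℂ] V)ˣ) (f : (V →ₗ[ℂ] V)ˣ → ℕ) (w : (V →ₗ[ℂ] V)ˣ) :
    Set (V →ₗ[ℂ] V)ˣ :=
  {u | u ∈ W ∧ leF f u w}

end CRG

open CRG

/-! Since codimfix is subadditive and bounded by `ℓ_R` on `W`, an equality
`ℓ_R x + ℓ_R (x⁻¹u) = ℓ_R u = codimfix u` forces `codimfix x + codimfix (x⁻¹u) = codimfix u`;
this gives (k) ⇒ (j). Conversely, let `t` be the first letter of a reduced reflection word for `u`.
Then `t ≤_{ℓ_R} u`, so `t ≤_{cdf} u` by (j), and `t⁻¹u` again lies strictly below `w` in `≤_{cdf}`,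
with smaller codimfix: (j) ⇒ (k) follows by induction on codimfix. -/

namespace CRG

open Module LinearMap

section LinearAlgebra

variable {K V : Type*} [Field K] [AddCommGroup V] [Module K V] [FiniteDimensional K V]

lemma finrank_range_mul_le_left (A B : V →ₗ[K] V) :
    finrank K (range (A * B)) ≤ finrank K (range A) :=
  Submodule.finrank_mono (range_comp_le_range B A)

lemma finrank_range_mul_le_right (A B : V →ₗ[K] V) :
    finrank K (range (A * B)) ≤ finrank K (range B) := by
  rw [Module.End.mul_eq_comp, range_comp]
  exact Submodule.finrank_map_le A (range B)

lemma finrank_range_add_le (A B : V →ₗ[K] V) :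
    finrank K (range (A + B)) ≤ finrank K (range A) + finrank K (range B) :=
  (Submodule.finrank_mono (range_add_le A B)).trans
    (Submodule.finrank_add_le_finrank_add_finrank _ _)

end LinearAlgebra

variable {V : Type*} [AddCommGroup V] [Module ℂ V]

section Order

variable {f : (V →ₗ[ℂ] V)ˣ → ℕ}

lemma leF_trans (hf : ∀ a b, f (a * b) ≤ f a + f b) {a b c : (V →ₗ[ℂ] V)ˣ}
    (hab : leF f a b) (hbc : leF f b c) : leF f a c := by
  have h1 := hf (a⁻¹ * b) (b⁻¹ * c)
  have h2 := hf a (a⁻¹ * c)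
  rw [show a⁻¹ * b * (b⁻¹ * c) = a⁻¹ * c by group] at h1
  rw [mul_inv_cancel_left] at h2
  unfold leF at *
  omega

lemma leF_inv_mul_of_leF (hf : ∀ a b, f (a * b) ≤ f a + f b)
    (hconj : ∀ g a, f (g⁻¹ * a * g) ≤ f a) {x u : (V →ₗ[ℂ] V)ˣ} (h : leF f x u) :
    leF f (x⁻¹ * u) u := by
  have h1 := hf (x⁻¹ * u) (u⁻¹ * x * u)
  have h2 := hconj u x
  rw [show x⁻¹ * u * (u⁻¹ * x * u) = u by group] at h1
  unfold leF at *
  rw [show (x⁻¹ * u)⁻¹ * u = u⁻¹ * x * u by group]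
  omega

lemma eq_of_leF_of_leF (hf : ∀ a, f a = 0 → a = 1) {a b : (V →ₗ[ℂ] V)ˣ}
    (hab : leF f a b) (hba : leF f b a) : a = b := by
  unfold leF at hab hba
  exact inv_mul_eq_one.1 (hf _ (by omega))

end Order

lemma lR_le_length {W : Subgroup (V →ₗ[ℂ] V)ˣ} {u : (V →ₗ[ℂ] V)ˣ} {l : List (V →ₗ[ℂ] V)ˣ}
    (hl : ∀ t ∈ l, IsRefl W t) (hprod : l.prod = u) : lR W u ≤ l.length :=
  Nat.sInf_le ⟨l, hl, rfl, hprod⟩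

lemma lR_one {W : Subgroup (V →ₗ[ℂ] V)ˣ} : lR W 1 = 0 :=
  Nat.le_zero.1 (lR_le_length (l := []) (by simp) rfl)

variable [FiniteDimensional ℂ V]

lemma cdf_eq_finrank_range (g : (V →ₗ[ℂ] V)ˣ) :
    cdf g = finrank ℂ (range ((g : V →ₗ[ℂ] V) - 1)) := by
  rw [cdf, Module.End.one_eq_id,
    ← finrank_range_add_finrank_ker ((g : V →ₗ[ℂ] V) - LinearMap.id), Nat.add_sub_cancel]

lemma cdf_eq_zero_iff {g : (V →ₗ[ℂ] V)ˣ} : cdf g = 0 ↔ g = 1 := by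
  rw [cdf_eq_finrank_range, Submodule.finrank_eq_zero, range_eq_bot, sub_eq_zero,
    Units.val_eq_one]

lemma cdf_one : cdf (1 : (V →ₗ[ℂ] V)ˣ) = 0 :=
  cdf_eq_zero_iff.2 rfl

lemma cdf_mul_le (a b : (V →ₗ[ℂ] V)ˣ) : cdf (a * b) ≤ cdf a + cdf b := by
  have h : ((a * b : (V →ₗ[ℂ] V)ˣ) : V →ₗ[ℂ] V) - 1 = (↑a - 1) * ↑b + (↑b - 1) := by
    rw [Units.val_mul]; noncomm_ring
  rw [cdf_eq_finrank_range, cdf_eq_finrank_range a, cdf_eq_finrank_range b, h]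
  exact (finrank_range_add_le _ _).trans
    (Nat.add_le_add_right (finrank_range_mul_le_left _ _) _)

lemma cdf_conj_le (g a : (V →ₗ[ℂ] V)ˣ) : cdf (g⁻¹ * a * g) ≤ cdf a := by
  have h : ((g⁻¹ * a * g : (V →ₗ[ℂ] V)ˣ) : V →ₗ[ℂ] V) - 1 = ↑g⁻¹ * (↑a - 1) * ↑g := by
    rw [Units.val_mul, Units.val_mul, mul_sub, sub_mul, mul_one, ← Units.val_mul g⁻¹ g,
      inv_mul_cancel, Units.val_one]
  rw [cdf_eq_finrank_range, cdf_eq_finrank_range, h]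
  exact (finrank_range_mul_le_left _ _).trans (finrank_range_mul_le_right _ _)

lemma cdf_inv_le (g : (V →ₗ[ℂ] V)ˣ) : cdf g⁻¹ ≤ cdf g := by
  have h : ((g⁻¹ : (V →ₗ[ℂ] V)ˣ) : V →ₗ[ℂ] V) - 1 = -(↑g⁻¹ * (↑g - 1)) := by
    rw [mul_sub, ← Units.val_mul, inv_mul_cancel, Units.val_one, mul_one, neg_sub]
  rw [cdf_eq_finrank_range, cdf_eq_finrank_range, h, range_neg]
  exact finrank_range_mul_le_right _ _

lemma cdf_inv (g : (V →ₗ[ℂ] V)ˣ) : cdf g⁻¹ = cdf g :=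
  le_antisymm (cdf_inv_le g) (by simpa using cdf_inv_le g⁻¹)

lemma leF_cdf_and_ne_of_leF_of_ne {x u w : (V →ₗ[ℂ] V)ˣ} (hxu : leF cdf x u)
    (huw : leF cdf u w) (hne : u ≠ w) : leF cdf x w ∧ x ≠ w := by
  refine ⟨leF_trans cdf_mul_le hxu huw, ?_⟩
  rintro rfl
  exact hne (eq_of_leF_of_leF (fun _ => cdf_eq_zero_iff.1) huw hxu)

section ReflectionLength

variable {W : Subgroup (V →ₗ[ℂ] V)ˣ}

lemma IsRefl.inv {t : (V →ₗ[ℂ] V)ˣ} (ht : IsRefl W t) : IsRefl W t⁻¹ :=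
  ⟨inv_mem ht.1, (cdf_inv t).trans ht.2⟩

lemma exists_isRefl_list_prod_eq (hgen : Subgroup.closure {t | IsRefl W t} = W)
    {u : (V →ₗ[ℂ] V)ˣ} (hu : u ∈ W) :
    ∃ l : List (V →ₗ[ℂ] V)ˣ, (∀ t ∈ l, IsRefl W t) ∧ l.prod = u := by
  rw [← hgen, ← Subgroup.mem_toSubmonoid, Subgroup.closure_toSubmonoid] at hu
  obtain ⟨l, hl, rfl⟩ := Submonoid.exists_list_of_mem_closure hu
  refine ⟨l, fun t ht => ?_, rfl⟩
  rcases hl t ht with h | h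
  · exact h
  · simpa using IsRefl.inv (W := W) h

lemma exists_isRefl_list_length_eq_lR (hgen : Subgroup.closure {t | IsRefl W t} = W)
    {u : (V →ₗ[ℂ] V)ˣ} (hu : u ∈ W) :
    ∃ l : List (V →ₗ[ℂ] V)ˣ, (∀ t ∈ l, IsRefl W t) ∧ l.length = lR W u ∧ l.prod = u := by
  obtain ⟨l, hl, hprod⟩ := exists_isRefl_list_prod_eq hgen hu
  have hlengths : {k | ∃ l : List (V →ₗ[ℂ] V)ˣ,
      (∀ t ∈ l, IsRefl W t) ∧ l.length = k ∧ l.prod = u}.Nonempty := ⟨l.length, l, hl, rfl, hprod⟩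
  exact Nat.sInf_mem hlengths

lemma lR_mul_le (hgen : Subgroup.closure {t | IsRefl W t} = W) {a b : (V →ₗ[ℂ] V)ˣ}
    (ha : a ∈ W) (hb : b ∈ W) : lR W (a * b) ≤ lR W a + lR W b := by
  obtain ⟨la, hla, hlena, rfl⟩ := exists_isRefl_list_length_eq_lR hgen ha
  obtain ⟨lb, hlb, hlenb, rfl⟩ := exists_isRefl_list_length_eq_lR hgen hb
  rw [← hlena, ← hlenb, ← List.length_append]
  exact lR_le_length (fun t ht => (List.mem_append.1 ht).elim (hla t) (hlb t)) List.prod_append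

lemma cdf_list_prod_le {l : List (V →ₗ[ℂ] V)ˣ} (hl : ∀ t ∈ l, IsRefl W t) :
    cdf l.prod ≤ l.length := by
  induction l with
  | nil => simp [cdf_one]
  | cons t l ih =>
    rw [List.prod_cons, List.length_cons, add_comm, ← (hl t List.mem_cons_self).2]
    exact (cdf_mul_le t l.prod).trans
      (Nat.add_le_add_left (ih fun s hs => hl s (List.mem_cons_of_mem t hs)) _)

lemma cdf_le_lR (hgen : Subgroup.closure {t | IsRefl W t} = W) {u : (V →ₗ[ℂ] V)ˣ}
    (hu : u ∈ W) : cdf u ≤ lR W u := by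
  obtain ⟨l, hl, hlen, rfl⟩ := exists_isRefl_list_length_eq_lR hgen hu
  exact hlen ▸ cdf_list_prod_le hl

lemma lR_eq_one_of_isRefl (hgen : Subgroup.closure {t | IsRefl W t} = W)
    {t : (V →ₗ[ℂ] V)ˣ} (ht : IsRefl W t) : lR W t = 1 :=
  le_antisymm (lR_le_length (l := [t]) (by simpa using ht) (by simp))
    (ht.2 ▸ cdf_le_lR hgen ht.1)

lemma exists_isRefl_leF_lR (hgen : Subgroup.closure {t | IsRefl W t} = W)
    {u : (V →ₗ[ℂ] V)ˣ} (hu : u ∈ W) (hne : u ≠ 1) : ∃ t, IsRefl W t ∧ leF (lR W) t u := by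
  obtain ⟨l, hl, hlen, rfl⟩ := exists_isRefl_list_length_eq_lR hgen hu
  cases l with
  | nil => exact absurd List.prod_nil hne
  | cons t l =>
    have ht := hl t List.mem_cons_self
    have hrest : lR W (t⁻¹ * (t :: l).prod) ≤ l.length :=
      lR_le_length (fun s hs => hl s (List.mem_cons_of_mem t hs)) (by simp)
    have hsplit := lR_mul_le hgen ht.1 (mul_mem (inv_mem ht.1) hu)
    rw [mul_inv_cancel_left] at hsplit
    rw [List.length_cons] at hlen
    refine ⟨t, ht, ?_⟩
    unfold leF
    rw [lR_eq_one_of_isRefl hgen ht] at hsplit ⊢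
    omega

lemma leF_cdf_of_leF_lR (hgen : Subgroup.closure {t | IsRefl W t} = W)
    {x u : (V →ₗ[ℂ] V)ˣ} (hx : x ∈ W) (hu : u ∈ W) (h : lR W u = cdf u)
    (hxu : leF (lR W) x u) : leF cdf x u := by
  have hcx := cdf_le_lR hgen hx
  have hcy := cdf_le_lR hgen (mul_mem (inv_mem hx) hu)
  have hsplit := cdf_mul_le x (x⁻¹ * u)
  rw [mul_inv_cancel_left] at hsplit
  unfold leF at *
  omega

lemma lR_eq_cdf_of_forall_interval_eq (hgen : Subgroup.closure {t | IsRefl W t} = W)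
    {w : (V →ₗ[ℂ] V)ˣ}
    (hJ : ∀ u, u ∈ W → leF cdf u w → u ≠ w → interval W (lR W) u = interval W cdf u) :
    ∀ u, u ∈ W → leF cdf u w → u ≠ w → lR W u = cdf u := by
  intro u
  induction hn : cdf u using Nat.strong_induction_on generalizing u with
  | _ n ih =>
    intro hu huw hne
    rcases eq_or_ne u 1 with rfl | h1
    · rw [lR_one, ← hn, cdf_one]
    obtain ⟨t, ht, htu⟩ := exists_isRefl_leF_lR hgen hu h1
    have htu' : t ∈ interval W cdf u := by
      rw [← hJ u hu huw hne]
      exact ⟨ht.1, htu⟩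
    replace htu' : leF cdf t u := htu'.2
    obtain ⟨hvw, hvne⟩ := leF_cdf_and_ne_of_leF_of_ne
      (leF_inv_mul_of_leF cdf_mul_le cdf_conj_le htu') huw hne
    unfold leF at htu htu'
    rw [lR_eq_one_of_isRefl hgen ht] at htu
    rw [ht.2] at htu'
    have hv := ih _ (by omega) (t⁻¹ * u) rfl (mul_mem (inv_mem ht.1) hu) hvw hvne
    omega

lemma interval_eq_of_forall_lR_eq_cdf (hgen : Subgroup.closure {t | IsRefl W t} = W)
    {w : (V →ₗ[ℂ] V)ˣ} (hK : ∀ u, u ∈ W → leF cdf u w → u ≠ w → lR W u = cdf u) :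
    ∀ u, u ∈ W → leF cdf u w → u ≠ w → interval W (lR W) u = interval W cdf u := by
  intro u hu huw hne
  refine Set.ext fun x => and_congr_right fun hx =>
    ⟨leF_cdf_of_leF_lR hgen hx hu (hK u hu huw hne), fun hxu => ?_⟩
  obtain ⟨hxw, hxne⟩ := leF_cdf_and_ne_of_leF_of_ne hxu huw hne
  obtain ⟨hyw, hyne⟩ := leF_cdf_and_ne_of_leF_of_ne
    (leF_inv_mul_of_leF cdf_mul_le cdf_conj_le hxu) huw hne
  unfold leF at hxu ⊢
  rwa [hK x hx hxw hxne, hK _ (mul_mem (inv_mem hx) hu) hyw hyne, hK u hu huw hne]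

end ReflectionLength

end CRG

theorem stmt14_general {V : Type*} [AddCommGroup V] [Module ℂ V] [FiniteDimensional ℂ V]
    (W : Subgroup (V →ₗ[ℂ] V)ˣ)
    (hgen : Subgroup.closure {t | CRG.IsRefl W t} = W)
    (w : (V →ₗ[ℂ] V)ˣ) :
    (∀ u : (V →ₗ[ℂ] V)ˣ, u ∈ W → leF cdf u w → u ≠ w →
        interval W (lR W) u = interval W cdf u) ↔
    (∀ u : (V →ₗ[ℂ] V)ˣ, u ∈ W → leF cdf u w → u ≠ w → lR W u = cdf u) :=
  ⟨lR_eq_cdf_of_forall_interval_eq hgen, interval_eq_of_forall_lR_eq_cdf hgen⟩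

/-- In a finite complex reflection group `W ⊆ GL(V)`, for `w ∈ W` the following two
conditions are equivalent:
(j) `[id, u]_{ℓ_R} = [id, u]_{cdf}` for every `u <_{cdf} w`;
(k) `ℓ_R(u) = codimfix(u)` for every `u <_{cdf} w`. -/
theorem stmt14 {V : Type*} [AddCommGroup V] [Module ℂ V] [FiniteDimensional ℂ V]
    (W : Subgroup (V →ₗ[ℂ] V)ˣ) (hfin : Finite W)
    (hgen : Subgroup.closure {t | CRG.IsRefl W t} = W)
    (w : (V →ₗ[ℂ] V)ˣ) (hw : w ∈ W) :
    (∀ u : (V →ₗ[ℂ] V)ˣ, u ∈ W → leF cdf u w → u ≠ w →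
        interval W (lR W) u = interval W cdf u) ↔
    (∀ u : (V →ₗ[ℂ] V)ˣ, u ∈ W → leF cdf u w → u ≠ w → lR W u = cdf u) :=
  stmt14_general W hgen w
end

section
/- For w ∈ S_n, exc(w) equals the least k such that w can be written as a product of k permutations each having exactly one excedance; that is, exc is the length function ℓ_T on S_n for the generating set T = {v ∈ S_n : exc(v) = 1}. Moreover, the partial order ≤_exc on S_n defined by x ≤_exc y ⟺ exc(x) + exc(x⁻¹y) = exc(y) has a unique maximal element, namely the n-cycle (1 2 ⋯ n) (the permutation sending i to i+1 for i < n and n to 1), which is the unique element of S_n with n − 1 excedances. -/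
/-!
Excedances are subadditive, `exc (u * v) ≤ exc u + exc v`, since an excedance of `u * v` at `i`
is an excedance of `v` at `i` or of `u` at `v i`. Conversely, at any excedance `i` of `w` one can
split off a permutation `v` whose only excedance is at `i` (a cycle through `i`, `w i` and
positions between them) with `exc (v⁻¹ * w) = exc w - 1`.

For the cycle `c = finRotate n`, the excedances of `w⁻¹ * c` correspond, via `j = w⁻¹ (c i)`, to
the `j` with `0 < w j ≤ j`; these are exactly the non-excedances of `w` other than `w⁻¹ 0`, so
`exc w + exc (w⁻¹ * c) = n - 1`. This identity gives `exc ≤ n - 1`, `exc c = n - 1`, and, as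
`exc` vanishes only at `1`, both characterisations of `c`.
-/

/-- The excedance number of a permutation: `exc w = #{i : w i > i}`. -/
def exc {n : ℕ} (w : Equiv.Perm (Fin n)) : ℕ :=
  (Finset.univ.filter fun i : Fin n => i < w i).card

open Equiv Finset

section

variable {n : ℕ}

theorem exc_eq_sum (w : Perm (Fin n)) : exc w = ∑ i, if i < w i then 1 else 0 :=
  card_filter _ _

theorem exc_eq_sum_inv_lt (w : Perm (Fin n)) : exc w = ∑ j, if w⁻¹ j < j then 1 else 0 := by
  rw [exc_eq_sum, ← Equiv.sum_comp w⁻¹]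
  simp only [Perm.coe_inv, apply_symm_apply]

theorem exc_one : exc (1 : Perm (Fin n)) = 0 := by
  simp [exc]

theorem exc_eq_zero_iff {w : Perm (Fin n)} : exc w = 0 ↔ w = 1 := by
  refine ⟨fun h => ?_, fun h => h ▸ exc_one⟩
  have hle : ∀ i, (w i : ℕ) ≤ i := fun i =>
    not_lt.mp (filter_eq_empty_iff.mp (card_eq_zero.mp h) (mem_univ i))
  have hsum : ∑ i, (w i : ℕ) = ∑ i : Fin n, (i : ℕ) := Equiv.sum_comp w (fun i => (i : ℕ))
  ext i
  exact (sum_eq_sum_iff_of_le fun i _ => hle i).mp hsum i (mem_univ i)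

theorem exc_inv_mul_eq_zero_iff {x y : Perm (Fin n)} : exc (x⁻¹ * y) = 0 ↔ x = y := by
  rw [exc_eq_zero_iff, inv_mul_eq_one]

theorem exc_mul_le (u v : Perm (Fin n)) : exc (u * v) ≤ exc u + exc v := by
  rw [exc_eq_sum, exc_eq_sum u, exc_eq_sum v,
    ← Equiv.sum_comp v (fun j => if j < u j then 1 else 0), ← sum_add_distrib]
  refine sum_le_sum fun i _ => ?_
  simp only [Perm.mul_apply]
  grind

theorem exc_add_sum_eq_of_eqOn_compl {u w : Perm (Fin n)} (s : Finset (Fin n))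
    (h : ∀ x ∉ s, u x = w x) :
    exc u + ∑ x ∈ s, (if x < w x then 1 else 0) = exc w + ∑ x ∈ s, (if x < u x then 1 else 0) := by
  have hcompl : ∑ x ∈ sᶜ, (if x < u x then 1 else 0) = ∑ x ∈ sᶜ, (if x < w x then 1 else 0) :=
    sum_congr rfl fun x hx => by rw [h x (mem_compl.mp hx)]
  rw [exc_eq_sum, exc_eq_sum w, ← sum_add_sum_compl s (fun x => if x < u x then 1 else 0),
    ← sum_add_sum_compl s (fun x => if x < w x then 1 else 0), hcompl]
  ring

theorem exc_swap_mul_add {w : Perm (Fin n)} {i p : Fin n} (hi : i < w i) (hp : w p = i) :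
    exc (swap i (w i) * w) + 1 + (if p < i then 1 else 0) = exc w + (if p < w i then 1 else 0) := by
  have hpi : p ≠ i := by rintro rfl; exact hi.ne' hp
  have := exc_add_sum_eq_of_eqOn_compl {i, p} (u := swap i (w i) * w) (w := w) fun x hx => by
    simp only [mem_insert, mem_singleton, not_or] at hx
    rw [Perm.mul_apply, swap_apply_of_ne_of_ne]
    · exact fun h => hx.2 (w.injective (h.trans hp.symm))
    · exact fun h => hx.1 (w.injective h)
  rw [sum_pair hpi.symm, sum_pair hpi.symm] at this
  simp only [Perm.mul_apply, hp, swap_apply_left, swap_apply_right, lt_irrefl, if_false, hi,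
    if_true] at this
  omega

theorem lt_swap_apply_iff {i b : Fin n} (h : i < b) (x : Fin n) : x < swap i b x ↔ x = i := by
  by_cases hxi : x = i
  · simp [hxi, h]
  by_cases hxb : x = b
  · simp [hxb, lt_asymm h, h.ne']
  rw [swap_apply_of_ne_of_ne hxi hxb]
  exact iff_of_false (lt_irrefl x) hxi

theorem lt_swap_mul_apply_iff {v : Perm (Fin n)} {i p : Fin n} (hip : i < p)
    (hv : ∀ x, x < v x ↔ x = p) (hvi : v i = i) (x : Fin n) :
    x < (swap i (v p) * v) x ↔ x = i := by
  have hvp : p < v p := (hv p).mpr rfl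
  by_cases hxi : x = i
  · simp [hxi, hvi, hip.trans hvp]
  by_cases hxp : x = p
  · simp [hxp, lt_asymm hip, hip.ne']
  rw [Perm.mul_apply, swap_apply_of_ne_of_ne (fun h => hxi (v.injective (h.trans hvi.symm)))
    (fun h => hxp (v.injective h)), hv]
  exact iff_of_false hxp hxi

theorem support_swap_apply_subset {w : Perm (Fin n)} {i : Fin n} (hi : w i ≠ i) :
    (swap i (w i)).support ⊆ w.support := by
  rw [Perm.support_swap hi.symm, insert_subset_iff, singleton_subset_iff, Perm.mem_support,
    Perm.mem_support]
  exact ⟨hi, fun h => hi (w.injective h)⟩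

/- Induction on `w i - i`. With `p := w⁻¹ i`, the product `swap i (w i) * w` fixes `i` and sends
`p` to `w i`; if `i < p < w i` this moves the excedance to `p`, closer to its value, and otherwise
it just removes the excedance at `i`. The support clause guarantees that the permutation obtained
for `p` still fixes `i`. -/
theorem exists_single_excedance_inv_mul (w : Perm (Fin n)) (i : Fin n) (hi : i < w i) :
    ∃ v : Perm (Fin n), (∀ x, x < v x ↔ x = i) ∧ v i = w i ∧ v.support ⊆ w.support ∧
      exc (v⁻¹ * w) + 1 = exc w := by
  induction hd : (w i : ℕ) - i using Nat.strong_induction_on generalizing w i with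
  | _ d ih =>
  obtain ⟨p, hwp⟩ := w.surjective i
  have hswap := exc_swap_mul_add hi hwp
  have hswap_supp := support_swap_apply_subset hi.ne'
  by_cases hp : i < p ∧ p < w i
  · set w' := swap i (w i) * w
    have hw'p : w' p = w i := by simp [w', hwp]
    have hw'i : w' i = i := by simp [w']
    obtain ⟨v', hv'_exc, hv'p, hv'_supp, hv'⟩ :=
      ih (w i - p) (by omega) w' p (hw'p ▸ hp.2) (by rw [hw'p])
    have hv'i : v' i = i := Perm.notMem_support.mp fun h =>
      Perm.notMem_support.mpr hw'i (hv'_supp h)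
    have hw'_supp : w'.support ⊆ w.support :=
      (Perm.support_mul_le _ _).trans (union_subset hswap_supp subset_rfl)
    have hv'_exc' := lt_swap_mul_apply_iff hp.1 hv'_exc hv'i
    rw [hv'p, hw'p] at hv'_exc'
    refine ⟨swap i (w i) * v', hv'_exc', by simp [hv'i], ?_, ?_⟩
    · exact (Perm.support_mul_le _ _).trans
        (union_subset hswap_supp (hv'_supp.trans hw'_supp))
    · rw [mul_inv_rev, swap_inv, mul_assoc, hv']
      simp only [lt_asymm hp.1, hp.2, if_false, if_true] at hswap
      omega
  · refine ⟨swap i (w i), lt_swap_apply_iff hi, swap_apply_left i (w i), hswap_supp, ?_⟩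
    have hpi : p ≠ i := by rintro rfl; exact hi.ne' hwp
    rw [swap_inv]
    split_ifs at hswap <;> grind

theorem finRotate_inv_apply_lt_iff {m : ℕ} (y j : Fin (m + 1)) :
    (finRotate (m + 1))⁻¹ y < j ↔ y ≤ j ∧ y ≠ 0 := by
  rw [Perm.coe_inv, finRotate_symm_apply]
  rcases eq_or_ne y 0 with rfl | hy
  · simpa [Fin.lt_def] using j.is_le
  · have hy' : (y : ℕ) ≠ 0 := Fin.val_ne_zero_iff.mpr hy
    rw [Fin.lt_def, Fin.le_def, Fin.val_sub_one_of_ne_zero hy, and_iff_left hy]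
    omega

theorem exc_add_exc_inv_mul_finRotate (w : Perm (Fin n)) :
    exc w + exc (w⁻¹ * finRotate n) = n - 1 := by
  cases n with
  | zero => simp [exc]
  | succ m =>
  rw [exc_eq_sum, exc_eq_sum_inv_lt, mul_inv_rev, inv_inv, ← sum_add_distrib]
  calc ∑ j, ((if j < w j then 1 else 0) + if ((finRotate (m + 1))⁻¹ * w) j < j then 1 else 0)
      = ∑ j, if w j ≠ 0 then 1 else 0 := sum_congr rfl fun j _ => by
        simp only [Perm.mul_apply, finRotate_inv_apply_lt_iff]
        split_ifs <;> grind
    _ = ∑ y, if y ≠ 0 then 1 else 0 := Equiv.sum_comp w (fun y => if y ≠ 0 then 1 else 0)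
    _ = m := by
      rw [sum_boole, Nat.cast_id, filter_ne', card_erase_of_mem (mem_univ 0), card_univ,
        Fintype.card_fin, Nat.add_sub_cancel]

theorem exc_finRotate : exc (finRotate n) = n - 1 := by
  simpa [exc_one] using exc_add_exc_inv_mul_finRotate (finRotate n)

theorem exc_le_sub_one (w : Perm (Fin n)) : exc w ≤ n - 1 :=
  (exc_add_exc_inv_mul_finRotate w).le.trans' (Nat.le_add_right _ _)

theorem exc_eq_one_of_forall_lt_iff {v : Perm (Fin n)} {i : Fin n} (h : ∀ x, x < v x ↔ x = i) :
    exc v = 1 := by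
  simp only [exc, h, filter_eq', mem_univ, if_true, card_singleton]

theorem exists_list_prod_eq (w : Perm (Fin n)) :
    ∃ l : List (Perm (Fin n)), (∀ v ∈ l, exc v = 1) ∧ l.length = exc w ∧ l.prod = w := by
  induction hk : exc w generalizing w with
  | zero => exact ⟨[], by simp, rfl, (exc_eq_zero_iff.mp hk).symm⟩
  | succ k ih =>
    obtain ⟨i, hi⟩ := card_pos.mp (hk ▸ k.succ_pos : 0 < exc w)
    obtain ⟨v, hv_exc, -, -, hv⟩ := exists_single_excedance_inv_mul w i (mem_filter.mp hi).2
    obtain ⟨l, hl, hlen, hprod⟩ := ih (v⁻¹ * w) (by omega)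
    refine ⟨v :: l, ?_, by simp [hlen], by simp [hprod]⟩
    simpa [exc_eq_one_of_forall_lt_iff hv_exc] using hl

theorem exc_list_prod_le (l : List (Perm (Fin n))) (hl : ∀ v ∈ l, exc v = 1) :
    exc l.prod ≤ l.length := by
  induction l with
  | nil => simp [exc_one]
  | cons v l ih =>
    have hv := hl v List.mem_cons_self
    have hl' := ih fun u hu => hl u (List.mem_cons_of_mem v hu)
    have := exc_mul_le v l.prod
    rw [List.prod_cons, List.length_cons]
    omega

end

/-- `exc` is the length function on `S_n` for the generating set of permutations with
exactly one excedance: `exc w` is the least `k` such that `w` is a product of `k`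
permutations each having exactly one excedance.  Moreover, the partial order `≤_exc`
defined by `x ≤_exc y ↔ exc x + exc (x⁻¹y) = exc y` has a unique maximal element, namely
the `n`-cycle `(1 2 ⋯ n)` (the permutation `i ↦ i + 1` cyclically, `finRotate n`), which
is also the unique element of `S_n` with `n - 1` excedances. -/
theorem stmt19 (n : ℕ) :
    (∀ w : Equiv.Perm (Fin n),
        (∃ l : List (Equiv.Perm (Fin n)),
            (∀ v ∈ l, exc v = 1) ∧ l.length = exc w ∧ l.prod = w) ∧
        (∀ l : List (Equiv.Perm (Fin n)),
            (∀ v ∈ l, exc v = 1) → l.prod = w → exc w ≤ l.length)) ∧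
    (∀ w : Equiv.Perm (Fin n),
        (∀ y : Equiv.Perm (Fin n), exc w + exc (w⁻¹ * y) = exc y → y = w) ↔
          w = finRotate n) ∧
    (∀ w : Equiv.Perm (Fin n), exc w = n - 1 ↔ w = finRotate n) := by
  refine ⟨fun w => ⟨exists_list_prod_eq w, fun l hl hprod => hprod ▸ exc_list_prod_le l hl⟩,
    fun w => ⟨fun hmax => ?_, ?_⟩, fun w => ⟨fun hw => ?_, ?_⟩⟩
  · exact (hmax _ ((exc_add_exc_inv_mul_finRotate w).trans exc_finRotate.symm)).symm
  · rintro rfl y hy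
    have := exc_le_sub_one y
    rw [exc_finRotate] at hy
    exact (exc_inv_mul_eq_zero_iff.mp (by omega)).symm
  · have := exc_add_exc_inv_mul_finRotate w
    exact exc_inv_mul_eq_zero_iff.mp (by omega)
  · rintro rfl
    exact exc_finRotate
end
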